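/- arXiv:2511.12881 — 6 statements merged into one kernel-verified Lean document; each statement's English description precedes it below -/
import Mathlib

section
/- Let λ1, λ2 > 0 and let k, l ≥ 1 be integers. Let X and Y be independent real random variables, where X has the Gamma distribution with shape k and rate λ1 and Y has the Gamma distribution with shape l and rate λ2. Then E[|X − Y|] = Σ_{i=0}^{k−1} C(l−1+i, i) · 2(k − i) · λ1^{i−1} · λ2^{l} / (λ1 + λ2)^{l+i} − k/λ1 + l/λ2. -/
open MeasureTheory ProbabilityTheory

/-!
Pointwise `|x - y| = 2 (x - y)⁺ - x + y`, and by independence `E (X - Y)⁺ = E g(Y)` with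
`g y = E (X - y)⁺`. For `y ≥ 0`, substituting `x = y + s` and expanding `(y + s) ^ (k - 1)`
binomially gives `E (X - y)⁺ = ∑_{i < k} (k - i) / λ₁ · e^{-λ₁ y} (λ₁ y)^i / i!`, a combination
of Poisson weights. Averaging the Poisson weight `e^{-λ₁ y} (λ₁ y)^i / i!` over `y ~ Γ(l, λ₂)`
gives the negative binomial probability `C(l - 1 + i, i) λ₁^i λ₂^l / (λ₁ + λ₂)^(l + i)`.
-/

open Real Set
open scoped Nat

lemma integrableOn_pow_mul_exp_neg_mul_Ioi {c : ℝ} (hc : 0 < c) (n : ℕ) :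
    IntegrableOn (fun x : ℝ ↦ x ^ n * exp (-(c * x))) (Ioi 0) := by
  refine (integrableOn_rpow_mul_exp_neg_mul_rpow (s := n) (p := 1)
    (by linarith [n.cast_nonneg (α := ℝ)]) zero_lt_one hc).congr_fun (fun x _ ↦ ?_)
    measurableSet_Ioi
  simp [rpow_natCast]

lemma integral_pow_mul_exp_neg_mul_Ioi {c : ℝ} (hc : 0 < c) (n : ℕ) :
    ∫ x in Ioi 0, x ^ n * exp (-(c * x)) = n ! / c ^ (n + 1) := by
  have h := integral_rpow_mul_exp_neg_mul_Ioi (a := n + 1) (by positivity) hc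
  simp_rw [add_sub_cancel_right, Gamma_nat_eq_factorial, ← Nat.cast_add_one, rpow_natCast,
    one_div_pow] at h
  rw [h, one_div_mul_eq_div]

lemma integral_Ioi_pow_mul_exp_neg_mul_mul_sub {r : ℝ} (hr : 0 < r) (K : ℕ) (y : ℝ) :
    ∫ x in Ioi y, x ^ K * exp (-(r * x)) * (x - y) =
      ∑ m ∈ Finset.range (K + 1),
        K.choose m * y ^ m * exp (-(r * y)) * ((K - m + 1)! / r ^ (K - m + 2)) := by
  rw [← (measurePreserving_add_left volume y).setIntegral_preimage_emb
    (measurableEmbedding_addLeft y), preimage_const_add_Ioi, sub_self]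
  have hexpand : ∀ s, (y + s) ^ K * exp (-(r * (y + s))) * (y + s - y) =
      ∑ m ∈ Finset.range (K + 1),
        K.choose m * y ^ m * exp (-(r * y)) * (s ^ (K - m + 1) * exp (-(r * s))) := by
    intro s
    rw [add_pow, Finset.sum_mul, Finset.sum_mul]
    refine Finset.sum_congr rfl fun m _ ↦ ?_
    rw [mul_add, neg_add, exp_add]
    ring
  simp_rw [hexpand]
  rw [integral_finsetSum _ fun m _ ↦ (integrableOn_pow_mul_exp_neg_mul_Ioi hr _).const_mul _]
  refine Finset.sum_congr rfl fun m _ ↦ ?_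
  rw [integral_const_mul, integral_pow_mul_exp_neg_mul_Ioi hr]

lemma gammaPDFReal_natCast_succ {r x : ℝ} (K : ℕ) (hx : 0 ≤ x) :
    gammaPDFReal ((K + 1 : ℕ) : ℝ) r x = r ^ (K + 1) / K ! * (x ^ K * exp (-(r * x))) := by
  rw [gammaPDFReal, if_pos hx, rpow_natCast, Nat.cast_add_one, Gamma_nat_eq_factorial,
    add_sub_cancel_right, rpow_natCast]
  ring

lemma toReal_gammaPDF_natCast_succ_smul {r : ℝ} (hr : 0 < r) (K : ℕ) (g : ℝ → ℝ) :
    (fun x ↦ (gammaPDF ((K + 1 : ℕ) : ℝ) r x).toReal • g x) =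
      (Ici 0).indicator (fun x ↦ r ^ (K + 1) / K ! * (x ^ K * exp (-(r * x)) * g x)) := by
  ext x
  rcases lt_or_ge x 0 with hx | hx
  · simp [gammaPDF_of_neg hx, hx]
  · rw [indicator_of_mem (mem_Ici.mpr hx), gammaPDF,
      ENNReal.toReal_ofReal (gammaPDFReal_nonneg (by positivity) hr x),
      gammaPDFReal_natCast_succ K hx, smul_eq_mul]
    ring

lemma integral_gammaMeasure_natCast_succ {r : ℝ} (hr : 0 < r) (K : ℕ) (g : ℝ → ℝ) :
    ∫ x, g x ∂gammaMeasure ((K + 1 : ℕ) : ℝ) r =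
      r ^ (K + 1) / K ! * ∫ x in Ioi 0, x ^ K * exp (-(r * x)) * g x := by
  rw [gammaMeasure, integral_withDensity_eq_integral_toReal_smul
    (f := gammaPDF _ r) (measurable_gammaPDFReal _ _).ennreal_ofReal
    (ae_of_all _ fun _ ↦ ENNReal.ofReal_lt_top),
    toReal_gammaPDF_natCast_succ_smul hr, integral_indicator measurableSet_Ici,
    integral_Ici_eq_integral_Ioi, integral_const_mul]

lemma integrable_gammaMeasure_natCast_succ {r : ℝ} (hr : 0 < r) (K : ℕ) {g : ℝ → ℝ}
    (hg : IntegrableOn (fun x ↦ x ^ K * exp (-(r * x)) * g x) (Ioi 0)) :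
    Integrable g (gammaMeasure ((K + 1 : ℕ) : ℝ) r) := by
  rw [gammaMeasure, integrable_withDensity_iff_integrable_smul'
    (f := gammaPDF _ r) (measurable_gammaPDFReal _ _).ennreal_ofReal
    (ae_of_all _ fun _ ↦ ENNReal.ofReal_lt_top),
    toReal_gammaPDF_natCast_succ_smul hr, integrable_indicator_iff measurableSet_Ici,
    integrableOn_Ici_iff_integrableOn_Ioi]
  exact hg.const_mul _

lemma ae_nonneg_gammaMeasure (a r : ℝ) : ∀ᵐ x ∂gammaMeasure a r, 0 ≤ x := by
  simp_rw [ae_iff, not_le]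
  change gammaMeasure a r (Iio 0) = 0
  rw [gammaMeasure, withDensity_apply _ measurableSet_Iio]
  exact lintegral_gammaPDF_of_nonpos le_rfl

lemma integrable_id_gammaMeasure_natCast_succ {r : ℝ} (hr : 0 < r) (K : ℕ) :
    Integrable id (gammaMeasure ((K + 1 : ℕ) : ℝ) r) :=
  integrable_gammaMeasure_natCast_succ hr K <|
    (integrableOn_pow_mul_exp_neg_mul_Ioi hr (K + 1)).congr_fun (fun x _ ↦ by simp only [id]; ring)
      measurableSet_Ioi

lemma integral_id_gammaMeasure_natCast_succ {r : ℝ} (hr : 0 < r) (K : ℕ) :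
    ∫ x, x ∂gammaMeasure ((K + 1 : ℕ) : ℝ) r = (K + 1) / r := by
  rw [integral_gammaMeasure_natCast_succ hr K fun x ↦ x]
  simp_rw [mul_right_comm _ (exp _), ← pow_succ]
  rw [integral_pow_mul_exp_neg_mul_Ioi hr, Nat.factorial_succ]
  push_cast
  field_simp
  ring

lemma integral_max_sub_gammaMeasure {r y : ℝ} (hr : 0 < r) (hy : 0 ≤ y) (K : ℕ) :
    ∫ x, max (x - y) 0 ∂gammaMeasure ((K + 1 : ℕ) : ℝ) r =
      ∑ m ∈ Finset.range (K + 1), (K + 1 - m : ℝ) / r * (exp (-(r * y)) * (r * y) ^ m / m !) := by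
  have hvanish : ∀ x ∈ Ioi 0 \ Ioi y, x ^ K * exp (-(r * x)) * max (x - y) 0 = 0 :=
    fun x hx ↦ by rw [max_eq_right (sub_nonpos.mpr (notMem_Ioi.mp hx.2)), mul_zero]
  have hpos : EqOn (fun x ↦ x ^ K * exp (-(r * x)) * max (x - y) 0)
      (fun x ↦ x ^ K * exp (-(r * x)) * (x - y)) (Ioi y) :=
    fun x (hx : y < x) ↦ by dsimp only; rw [max_eq_left (sub_nonneg.mpr hx.le)]
  rw [integral_gammaMeasure_natCast_succ hr K,
    setIntegral_eq_of_subset_of_forall_sdiff_eq_zero measurableSet_Ioi (Ioi_subset_Ioi hy) hvanish,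
    setIntegral_congr_fun measurableSet_Ioi hpos, integral_Ioi_pow_mul_exp_neg_mul_mul_sub hr,
    Finset.mul_sum]
  refine Finset.sum_congr rfl fun m hm ↦ ?_
  obtain ⟨j, rfl⟩ := Nat.exists_eq_add_of_le' (Finset.mem_range_succ_iff.mp hm)
  have hfac : ((j + m)! : ℝ) = (j + m).choose m * j ! * m ! := by
    exact_mod_cast (Nat.add_choose_mul_factorial_mul_factorial j m).symm
  have hchoose : ((j + m).choose m : ℝ) ≠ 0 :=
    Nat.cast_ne_zero.mpr (Nat.choose_pos (Nat.le_add_left m j)).ne'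
  rw [hfac, Nat.add_sub_cancel, Nat.factorial_succ]
  push_cast
  field_simp
  ring

lemma integral_sum_exp_mul_pow_gammaMeasure {a b : ℝ} (ha : 0 < a) (hb : 0 < b) (L : ℕ)
    (s : Finset ℕ) (c : ℕ → ℝ) :
    ∫ y, ∑ m ∈ s, c m * (exp (-(a * y)) * (a * y) ^ m / m !) ∂gammaMeasure ((L + 1 : ℕ) : ℝ) b =
      ∑ m ∈ s, c m * ((L + m).choose m * a ^ m * b ^ (L + 1) / (a + b) ^ (L + m + 1)) := by
  have hab : 0 < a + b := add_pos ha hb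
  have hexpand : ∀ y, y ^ L * exp (-(b * y)) *
      ∑ m ∈ s, c m * (exp (-(a * y)) * (a * y) ^ m / m !) =
        ∑ m ∈ s, c m * a ^ m / m ! * (y ^ (L + m) * exp (-((a + b) * y))) := by
    intro y
    rw [Finset.mul_sum]
    refine Finset.sum_congr rfl fun m _ ↦ ?_
    rw [add_mul, neg_add, exp_add]
    ring
  rw [integral_gammaMeasure_natCast_succ hb L]
  simp_rw [hexpand]
  rw [integral_finsetSum _ fun m _ ↦ (integrableOn_pow_mul_exp_neg_mul_Ioi hab _).const_mul _,
    Finset.mul_sum]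
  refine Finset.sum_congr rfl fun m _ ↦ ?_
  have hfac : ((L + m)! : ℝ) = (L + m).choose m * L ! * m ! := by
    exact_mod_cast (Nat.add_choose_mul_factorial_mul_factorial L m).symm
  rw [integral_const_mul, integral_pow_mul_exp_neg_mul_Ioi hab, hfac]
  field_simp

lemma integral_abs_sub_prod {ν₁ ν₂ : Measure ℝ} [IsProbabilityMeasure ν₁] [IsProbabilityMeasure ν₂]
    (h₁ : Integrable id ν₁) (h₂ : Integrable id ν₂) :
    ∫ p, |p.1 - p.2| ∂ν₁.prod ν₂ =
      2 * ∫ y, ∫ x, max (x - y) 0 ∂ν₁ ∂ν₂ - ∫ x, x ∂ν₁ + ∫ y, y ∂ν₂ := by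
  have hfst : Integrable (fun p : ℝ × ℝ ↦ p.1) (ν₁.prod ν₂) := h₁.comp_fst ν₂
  have hsnd : Integrable (fun p : ℝ × ℝ ↦ p.2) (ν₁.prod ν₂) := h₂.comp_snd ν₁
  have hmax : Integrable (fun p : ℝ × ℝ ↦ max (p.1 - p.2) 0) (ν₁.prod ν₂) :=
    (hfst.sub hsnd).pos_part
  have habs : ∀ t : ℝ, |t| = -t + 2 * max t 0 := fun t ↦ by
    rcases le_total t 0 with ht | ht
    · rw [abs_of_nonpos ht, max_eq_right ht]; ring
    · rw [abs_of_nonneg ht, max_eq_left ht]; ring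
  simp_rw [habs, neg_sub]
  rw [integral_add (f := fun p ↦ p.2 - p.1) (hsnd.sub hfst) (hmax.const_mul 2),
    integral_sub hsnd hfst, integral_const_mul, integral_prod_symm _ hmax,
    integral_fun_snd fun y ↦ y, integral_fun_fst fun x ↦ x]
  simp only [probReal_univ, one_smul]
  ring

theorem expected_abs_diff_gamma_intermediate_form
    {Ω : Type*} [MeasurableSpace Ω] (μ : Measure Ω) [IsProbabilityMeasure μ]
    (lam1 lam2 : ℝ) (hlam1 : 0 < lam1) (hlam2 : 0 < lam2)
    (k l : ℕ) (hk : 1 ≤ k) (hl : 1 ≤ l)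
    (X Y : Ω → ℝ) (hX : Measurable X) (hY : Measurable Y)
    (hindep : IndepFun X Y μ)
    (hXlaw : μ.map X = gammaMeasure k lam1)
    (hYlaw : μ.map Y = gammaMeasure l lam2) :
    (∫ ω, |X ω - Y ω| ∂μ) =
      (∑ i ∈ Finset.range k,
        ((l - 1 + i).choose i : ℝ) * (2 * ((k : ℝ) - (i : ℝ))) *
          lam1 ^ ((i : ℤ) - 1) * lam2 ^ l / (lam1 + lam2) ^ (l + i))
        - (k : ℝ) / lam1 + (l : ℝ) / lam2 := by
  obtain ⟨K, rfl⟩ := Nat.exists_eq_add_of_le' hk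
  obtain ⟨L, rfl⟩ := Nat.exists_eq_add_of_le' hl
  have := isProbabilityMeasure_gammaMeasure (Nat.cast_pos.mpr K.succ_pos) hlam1
  have := isProbabilityMeasure_gammaMeasure (Nat.cast_pos.mpr L.succ_pos) hlam2
  have hlaw : μ.map (fun ω ↦ (X ω, Y ω)) = (gammaMeasure ((K + 1 : ℕ) : ℝ) lam1).prod
      (gammaMeasure ((L + 1 : ℕ) : ℝ) lam2) := by
    rw [← hXlaw, ← hYlaw]
    exact (indepFun_iff_map_prod_eq_prod_map_map hX.aemeasurable hY.aemeasurable).mp hindep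
  have hinner : ∀ᵐ y ∂gammaMeasure ((L + 1 : ℕ) : ℝ) lam2,
      ∫ x, max (x - y) 0 ∂gammaMeasure ((K + 1 : ℕ) : ℝ) lam1 = ∑ m ∈ Finset.range (K + 1),
        (K + 1 - m : ℝ) / lam1 * (exp (-(lam1 * y)) * (lam1 * y) ^ m / m !) :=
    (ae_nonneg_gammaMeasure _ _).mono fun y hy ↦ integral_max_sub_gammaMeasure hlam1 hy K
  rw [← integral_map (f := fun p : ℝ × ℝ ↦ |p.1 - p.2|) (hX.prodMk hY).aemeasurable
      (by fun_prop), hlaw,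
    integral_abs_sub_prod (integrable_id_gammaMeasure_natCast_succ hlam1 K)
      (integrable_id_gammaMeasure_natCast_succ hlam2 L),
    integral_id_gammaMeasure_natCast_succ hlam1, integral_id_gammaMeasure_natCast_succ hlam2,
    integral_congr_ae hinner, integral_sum_exp_mul_pow_gammaMeasure hlam1 hlam2, Finset.mul_sum]
  push_cast
  congr 2
  refine Finset.sum_congr rfl fun i _ ↦ ?_
  rw [zpow_sub_one₀ hlam1.ne', zpow_natCast]
  ring
end

section
/- Let C > 0 and let k ≥ 1 be an integer. For λ1, λ2 > 0, let E(λ1, λ2) denote E[|X − Y|], where X and Y are independent real random variables, X having the Gamma distribution with shape k and rate λ1 and Y having the Gamma distribution with shape k and rate λ2. Then for all λ1, λ2 > 0 satisfying the harmonic-mean constraint 2·λ1·λ2/(λ1 + λ2) = C, one has E(λ1, λ2) ≥ E(C, C); that is, under the constraint of constant harmonic mean C between the rates, the expected distance is minimized when λ1 = λ2 = C. -/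
/-! A `Gamma(k, λ)` variable is `Z / λ` with `Z ~ Gamma(k, 1)`, so with `a = 1/λ₁`, `b = 1/λ₂` and
`Z₁, Z₂` i.i.d. `Gamma(k, 1)` the expected distance is `E|a Z₁ - b Z₂|`, and the harmonic-mean
constraint says `(a + b) / 2 = 1/C`. Exchangeability of `(Z₁, Z₂)` gives
`E|a Z₁ - b Z₂| = E(|a Z₁ - b Z₂| + |a Z₂ - b Z₁|) / 2`, and the triangle inequality bounds the
right-hand side below by `(a + b) / 2 · E|Z₁ - Z₂| = E|Z₁ / C - Z₂ / C|`. -/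

open MeasureTheory ProbabilityTheory

/-- The expected absolute distance `E[|X - Y|]` for independent random variables
`X ~ Gamma(k, lam1)` and `Y ~ Gamma(k, lam2)`; since independence together with the
marginal laws determines the joint law as the product measure, this is the integral
of `|x - y|` against the product of the two gamma measures. -/
noncomputable def gammaExpectedAbsDist (k : ℕ) (lam1 lam2 : ℝ) : ℝ :=
  ∫ p : ℝ × ℝ, |p.1 - p.2| ∂((gammaMeasure k lam1).prod (gammaMeasure k lam2))

open Real Set

theorem gammaPDF_eq_ofReal_mul_gammaPDF_div {a r c : ℝ} (hr : 0 < r) (hc : 0 < c) (x : ℝ) :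
    gammaPDF a r x = ENNReal.ofReal c * gammaPDF a (r / c) (c * x) := by
  rcases lt_or_ge x 0 with hx | hx
  · rw [gammaPDF_of_neg hx, gammaPDF_of_neg (mul_neg_of_pos_of_neg hc hx), mul_zero]
  rw [gammaPDF_of_nonneg hx, gammaPDF_of_nonneg (by positivity), ← ENNReal.ofReal_mul hc.le]
  congr 1
  rw [div_rpow hr.le hc.le, mul_rpow hc.le hx, rpow_sub hc, rpow_one]
  field_simp

instance instSFiniteGammaMeasure (a r : ℝ) : SFinite (gammaMeasure a r) := by
  unfold gammaMeasure; infer_instance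

theorem gammaMeasure_map_const_mul {a r c : ℝ} (hr : 0 < r) (hc : 0 < c) :
    (gammaMeasure a r).map (c * ·) = gammaMeasure a (r / c) := by
  have hmul : Measurable (c * · : ℝ → ℝ) := measurable_const_mul c
  have hvol : (volume : Measure ℝ).map (c * ·) = ENNReal.ofReal c⁻¹ • volume := by
    rw [Real.map_volume_mul_left hc.ne', abs_of_pos (inv_pos.mpr hc)]
  have hpdf : Measurable (gammaPDF a (r / c)) := (measurable_gammaPDFReal a (r / c)).ennreal_ofReal
  ext s hs
  rw [Measure.map_apply hmul hs, gammaMeasure, gammaMeasure, withDensity_apply _ (hmul hs),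
    withDensity_apply _ hs]
  simp_rw [gammaPDF_eq_ofReal_mul_gammaPDF_div hr hc]
  rw [lintegral_const_mul (f := fun x => gammaPDF a (r / c) (c * x)) _ (hpdf.comp hmul),
    ← setLIntegral_map hs hpdf hmul, hvol, setLIntegral_smul_measure, smul_eq_mul, ← mul_assoc,
    ← ENNReal.ofReal_mul hc.le, mul_inv_cancel₀ hc.ne', ENNReal.ofReal_one, one_mul]

theorem integrable_id_gammaMeasure {a r : ℝ} (ha : 0 < a) (hr : 0 < r) :
    Integrable id (gammaMeasure a r) := by
  have hpdf : Measurable (gammaPDF a r) := (measurable_gammaPDFReal a r).ennreal_ofReal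
  rw [gammaMeasure, integrable_withDensity_iff hpdf (ae_of_all _ fun _ => ENNReal.ofReal_lt_top)]
  simp_rw [gammaPDF, ENNReal.toReal_ofReal (gammaPDFReal_nonneg ha hr _)]
  refine IntegrableOn.integrable_of_forall_notMem_eq_zero (s := Ioi 0) ?_ fun x hx => ?_
  · refine IntegrableOn.congr_fun ((integrableOn_rpow_mul_exp_neg_mul_rpow (p := 1) (s := a)
      (by linarith) one_pos hr).const_mul (r ^ a / Gamma a)) (fun x hx => ?_) measurableSet_Ioi
    have hx0 : x ≠ 0 := ne_of_gt hx
    rw [id, gammaPDFReal, if_pos (le_of_lt hx), rpow_one, rpow_sub_one hx0]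
    field_simp
  · rw [mem_Ioi, not_lt] at hx
    rcases hx.lt_or_eq with hx | rfl
    · simp [gammaPDFReal, not_le.mpr hx]
    · simp

theorem add_mul_abs_sub_le {a b : ℝ} (ha : 0 ≤ a) (hb : 0 ≤ b) (x y : ℝ) :
    (a + b) * |x - y| ≤ |a * x - b * y| + |a * y - b * x| := by
  calc (a + b) * |x - y| = |(a * x - b * y) - (a * y - b * x)| := by
        rw [← abs_of_nonneg (add_nonneg ha hb), ← abs_mul]; ring_nf
    _ ≤ |a * x - b * y| + |a * y - b * x| := abs_sub _ _

theorem integral_abs_mul_sub_swap (μ : Measure ℝ) [SFinite μ] (a b : ℝ) :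
    ∫ p, |a * p.2 - b * p.1| ∂(μ.prod μ) = ∫ p, |a * p.1 - b * p.2| ∂(μ.prod μ) :=
  integral_prod_swap (fun p : ℝ × ℝ => |a * p.1 - b * p.2|)

theorem integrable_abs_mul_sub {μ : Measure ℝ} [IsFiniteMeasure μ] (hμ : Integrable id μ)
    (a b : ℝ) :
    Integrable (fun p : ℝ × ℝ => |a * p.1 - b * p.2|) (μ.prod μ) :=
  ((hμ.comp_fst μ).const_mul a |>.sub ((hμ.comp_snd μ).const_mul b)).abs

theorem add_mul_integral_abs_sub_le {μ : Measure ℝ} [IsFiniteMeasure μ] (hμ : Integrable id μ)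
    {a b : ℝ} (ha : 0 ≤ a) (hb : 0 ≤ b) :
    (a + b) * ∫ p, |p.1 - p.2| ∂(μ.prod μ) ≤ 2 * ∫ p, |a * p.1 - b * p.2| ∂(μ.prod μ) := by
  have hsub : Integrable (fun p : ℝ × ℝ => |p.1 - p.2|) (μ.prod μ) := by
    simpa only [one_mul] using integrable_abs_mul_sub hμ 1 1
  have hswap : Integrable (fun p : ℝ × ℝ => |a * p.2 - b * p.1|) (μ.prod μ) := by
    simpa only [abs_sub_comm] using integrable_abs_mul_sub hμ b a
  calc (a + b) * ∫ p, |p.1 - p.2| ∂(μ.prod μ)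
      = ∫ p, (a + b) * |p.1 - p.2| ∂(μ.prod μ) := (integral_const_mul _ _).symm
    _ ≤ ∫ p, (|a * p.1 - b * p.2| + |a * p.2 - b * p.1|) ∂(μ.prod μ) :=
        integral_mono (hsub.const_mul _)
          ((integrable_abs_mul_sub hμ a b).add hswap) fun p => add_mul_abs_sub_le ha hb p.1 p.2
    _ = 2 * ∫ p, |a * p.1 - b * p.2| ∂(μ.prod μ) := by
        rw [integral_add (integrable_abs_mul_sub hμ a b) hswap, integral_abs_mul_sub_swap]; ring

theorem gammaExpectedAbsDist_eq_integral {k : ℕ} {u v : ℝ} (hu : 0 < u) (hv : 0 < v) :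
    gammaExpectedAbsDist k u v = ∫ p, |u⁻¹ * p.1 - v⁻¹ * p.2|
      ∂((gammaMeasure k 1).prod (gammaMeasure k 1)) := by
  have hmap {w : ℝ} (hw : 0 < w) : (gammaMeasure k 1).map (w⁻¹ * ·) = gammaMeasure k w := by
    rw [gammaMeasure_map_const_mul one_pos (inv_pos.mpr hw), one_div, inv_inv]
  rw [gammaExpectedAbsDist, ← hmap hu, ← hmap hv,
    Measure.map_prod_map _ _ (measurable_const_mul _) (measurable_const_mul _),
    integral_map (f := fun p : ℝ × ℝ => |p.1 - p.2|)
      ((measurable_const_mul _).prodMap (measurable_const_mul _)).aemeasurable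
      (measurable_fst.sub measurable_snd).abs.aestronglyMeasurable]
  rfl

theorem gammaExpectedAbsDist_self {k : ℕ} {u : ℝ} (hu : 0 < u) :
    gammaExpectedAbsDist k u u =
      u⁻¹ * ∫ p, |p.1 - p.2| ∂((gammaMeasure k 1).prod (gammaMeasure k 1)) := by
  simp_rw [gammaExpectedAbsDist_eq_integral hu hu, ← mul_sub, abs_mul,
    abs_of_pos (inv_pos.mpr hu), integral_const_mul]

theorem expected_abs_diff_minimized_at_equal_rates
    (C : ℝ) (hC : 0 < C) (k : ℕ) (hk : 1 ≤ k)
    (lam1 lam2 : ℝ) (hlam1 : 0 < lam1) (hlam2 : 0 < lam2)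
    (hharm : 2 * lam1 * lam2 / (lam1 + lam2) = C) :
    gammaExpectedAbsDist k C C ≤ gammaExpectedAbsDist k lam1 lam2 := by
  have hk0 : (0 : ℝ) < k := by exact_mod_cast hk
  have := isProbabilityMeasure_gammaMeasure hk0 one_pos
  have hmean : 2 * C⁻¹ = lam1⁻¹ + lam2⁻¹ := by
    rw [← hharm]; field_simp; ring
  have key := add_mul_integral_abs_sub_le (integrable_id_gammaMeasure hk0 one_pos)
    (inv_pos.mpr hlam1).le (inv_pos.mpr hlam2).le
  rw [← hmean, mul_assoc] at key
  rw [gammaExpectedAbsDist_self hC, gammaExpectedAbsDist_eq_integral hlam1 hlam2]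
  linarith
end

section
/- Let 0 < λ1 < λ2. For each integer k ≥ 1, let X_k and Y_k be independent real random variables, where X_k has the Gamma distribution with shape k and rate λ1 and Y_k has the Gamma distribution with shape k and rate λ2, and set s_k = |X_k − Y_k|/k. Then lim_{k→∞} E[s_k] = 1/λ1 − 1/λ2. -/
/-!
The gamma moments `∫ xⁿ dΓ(a, r) = Γ(a + n) / (Γ(a) rⁿ)` give `X_k / k` mean `1/λ₁` and variance
`1/(k λ₁²)`, so `E|X_k/k - 1/λ₁| ≤ 1/(λ₁ √k) → 0` since `(E|Z|)² ≤ E Z²`, and likewise for `Y_k`.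
Since `||x - y| - |a - b|| ≤ |x - a| + |y - b|`, this `L¹` convergence to constants gives
`E|X_k/k - Y_k/k| → |1/λ₁ - 1/λ₂|`.
-/

open MeasureTheory ProbabilityTheory Filter Real
open scoped Topology

namespace ProbabilityTheory

variable {a r : ℝ}

lemma measurable_gammaPDF (a r : ℝ) : Measurable (gammaPDF a r) :=
  (measurable_gammaPDFReal a r).ennreal_ofReal

lemma integral_gammaMeasure (ha : 0 < a) (hr : 0 < r) (g : ℝ → ℝ) :
    ∫ x, g x ∂gammaMeasure a r = ∫ x, gammaPDFReal a r x * g x := by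
  rw [gammaMeasure, integral_withDensity_eq_integral_toReal_smul (measurable_gammaPDF a r)
    (.of_forall fun _ => ENNReal.ofReal_lt_top)]
  simp only [gammaPDF, ENNReal.toReal_ofReal (gammaPDFReal_nonneg ha hr _), smul_eq_mul]

lemma integrable_gammaMeasure_iff (ha : 0 < a) (hr : 0 < r) {g : ℝ → ℝ} :
    Integrable g (gammaMeasure a r) ↔ Integrable (fun x => gammaPDFReal a r x * g x) := by
  rw [gammaMeasure, integrable_withDensity_iff_integrable_smul' (measurable_gammaPDF a r)
    (.of_forall fun _ => ENNReal.ofReal_lt_top)]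
  simp only [gammaPDF, ENNReal.toReal_ofReal (gammaPDFReal_nonneg ha hr _), smul_eq_mul]

lemma gammaPDFReal_mul_pow (ha : 0 < a) (hr : 0 < r) (n : ℕ) (x : ℝ) :
    gammaPDFReal a r x * x ^ n
      = Gamma (a + n) / (Gamma a * r ^ n) * gammaPDFReal (a + n) r x := by
  unfold gammaPDFReal
  split_ifs with hx
  · have hpow : x ^ (a + n - 1) = x ^ (a - 1) * x ^ n := by
      rcases n.eq_zero_or_pos with rfl | hn
      · simp
      · rw [show a + n - 1 = a - 1 + n by ring, rpow_add_natCast' hx]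
        have : (1 : ℝ) ≤ n := by exact_mod_cast hn
        linarith
    have hΓ : Gamma (a + n) ≠ 0 := (Gamma_pos_of_pos (by positivity)).ne'
    rw [hpow, rpow_add_natCast hr.ne']
    field_simp
  · simp

lemma integrable_pow_gammaMeasure (ha : 0 < a) (hr : 0 < r) (n : ℕ) :
    Integrable (fun x => x ^ n) (gammaMeasure a r) := by
  have : IsProbabilityMeasure (gammaMeasure (a + n) r) :=
    isProbabilityMeasure_gammaMeasure (by positivity) hr
  have h := (integrable_gammaMeasure_iff (a := a + n) (by positivity) hr).1 (integrable_const 1)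
  simp only [mul_one] at h
  rw [integrable_gammaMeasure_iff ha hr]
  simpa only [gammaPDFReal_mul_pow ha hr] using h.const_mul _

lemma integral_pow_gammaMeasure (ha : 0 < a) (hr : 0 < r) (n : ℕ) :
    ∫ x, x ^ n ∂gammaMeasure a r = Gamma (a + n) / (Gamma a * r ^ n) := by
  have : IsProbabilityMeasure (gammaMeasure (a + n) r) :=
    isProbabilityMeasure_gammaMeasure (by positivity) hr
  have h := integral_gammaMeasure (a := a + n) (by positivity) hr fun _ => 1
  simp only [integral_const, probReal_univ, smul_eq_mul, mul_one] at h
  rw [integral_gammaMeasure ha hr]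
  simp only [gammaPDFReal_mul_pow ha hr, integral_const_mul, ← h, mul_one]

lemma integral_id_gammaMeasure (ha : 0 < a) (hr : 0 < r) :
    ∫ x, x ∂gammaMeasure a r = a / r := by
  have h := integral_pow_gammaMeasure ha hr 1
  simp only [pow_one, Nat.cast_one, Gamma_add_one ha.ne'] at h
  rw [h]
  field_simp [(Gamma_pos_of_pos ha).ne']

lemma integral_sq_gammaMeasure (ha : 0 < a) (hr : 0 < r) :
    ∫ x, x ^ 2 ∂gammaMeasure a r = a * (a + 1) / r ^ 2 := by
  rw [integral_pow_gammaMeasure ha hr, Nat.cast_two, show a + 2 = a + 1 + 1 by ring,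
    Gamma_add_one (by positivity), Gamma_add_one ha.ne']
  field_simp [(Gamma_pos_of_pos ha).ne']

lemma memLp_id_gammaMeasure (ha : 0 < a) (hr : 0 < r) : MemLp id 2 (gammaMeasure a r) :=
  (memLp_two_iff_integrable_sq aestronglyMeasurable_id).2 (integrable_pow_gammaMeasure ha hr 2)

lemma variance_id_gammaMeasure (ha : 0 < a) (hr : 0 < r) :
    Var[id; gammaMeasure a r] = a / r ^ 2 := by
  have : IsProbabilityMeasure (gammaMeasure a r) := isProbabilityMeasure_gammaMeasure ha hr
  rw [variance_eq_sub (memLp_id_gammaMeasure ha hr)]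
  simp only [Pi.pow_apply, id_eq]
  rw [integral_sq_gammaMeasure ha hr, integral_id_gammaMeasure ha hr]
  field_simp
  ring

section Concentration

variable {Ω : Type*} [MeasurableSpace Ω] {μ : Measure Ω}

lemma HasLaw.memLp_two_of_gammaMeasure {X : Ω → ℝ} (ha : 0 < a) (hr : 0 < r)
    (hX : HasLaw X (gammaMeasure a r) μ) : MemLp X 2 μ := by
  have h := memLp_id_gammaMeasure ha hr
  rw [← hX.map_eq] at h
  exact (memLp_map_measure_iff aestronglyMeasurable_id hX.aemeasurable).1 h

variable [IsProbabilityMeasure μ]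

lemma integral_abs_sub_integral_le_sqrt_variance {X : Ω → ℝ} (hX : MemLp X 2 μ) :
    ∫ ω, |X ω - μ[X]| ∂μ ≤ √Var[X; μ] := by
  have hdev : MemLp (fun ω => |X ω - μ[X]|) 2 μ := (hX.sub (memLp_const _)).abs
  have h := variance_nonneg (fun ω => |X ω - μ[X]|) μ
  rw [variance_eq_sub hdev] at h
  simp only [Pi.pow_apply, sq_abs] at h
  rw [variance_eq_integral hX.aemeasurable]
  -- `0 ≤ Var |X - EX| = E (X - EX)² - (E |X - EX|)²`
  exact Real.le_sqrt_of_sq_le (by linarith)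

lemma HasLaw.integral_abs_div_sub_le_of_gammaMeasure {X : Ω → ℝ} (ha : 0 < a) (hr : 0 < r)
    (hX : HasLaw X (gammaMeasure a r) μ) :
    ∫ ω, |X ω / a - 1 / r| ∂μ ≤ 1 / (r * √a) := by
  have hmean : μ[X] = a / r := by rw [hX.integral_eq, integral_id_gammaMeasure ha hr]
  have hvar : Var[X; μ] = a / r ^ 2 := by rw [hX.variance_eq, variance_id_gammaMeasure ha hr]
  have hdev : ∀ ω, |X ω / a - 1 / r| = |X ω - μ[X]| / a := fun ω => by
    rw [hmean, show X ω / a - 1 / r = (X ω - a / r) / a by field_simp, abs_div, abs_of_pos ha]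
  calc ∫ ω, |X ω / a - 1 / r| ∂μ = (∫ ω, |X ω - μ[X]| ∂μ) / a := by
        simp only [hdev, integral_div]
    _ ≤ √Var[X; μ] / a :=
        div_le_div_of_nonneg_right (integral_abs_sub_integral_le_sqrt_variance
          (hX.memLp_two_of_gammaMeasure ha hr)) ha.le
    _ = 1 / (r * √a) := by
        have hsa : 0 < √a := sqrt_pos.2 ha
        rw [hvar, sqrt_div' _ (sq_nonneg r), sqrt_sq hr.le]
        field_simp
        exact sq_sqrt ha.le

lemma tendsto_integral_abs_div_sub_of_hasLaw_gammaMeasure {X : ℕ → Ω → ℝ} (hr : 0 < r)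
    (hX : ∀ᶠ k in atTop, HasLaw (X k) (gammaMeasure k r) μ) :
    Tendsto (fun k : ℕ => ∫ ω, |X k ω / k - 1 / r| ∂μ) atTop (𝓝 0) := by
  have hbound : Tendsto (fun k : ℕ => 1 / (r * √k)) atTop (𝓝 0) := by
    refine (tendsto_inv_atTop_zero.comp ?_).congr fun k => (one_div _).symm
    exact (tendsto_sqrt_atTop.comp tendsto_natCast_atTop_atTop).const_mul_atTop hr
  refine squeeze_zero' (.of_forall fun k => integral_nonneg fun ω => abs_nonneg _) ?_ hbound
  filter_upwards [hX, eventually_gt_atTop 0] with k hXk hk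
  exact hXk.integral_abs_div_sub_le_of_gammaMeasure (Nat.cast_pos.2 hk) hr

lemma tendsto_integral_abs_sub_of_tendsto_integral_abs_sub_const {ι : Type*} {l : Filter ι}
    {f g : ι → Ω → ℝ} {a b : ℝ} (hf : ∀ᶠ i in l, Integrable (f i) μ)
    (hg : ∀ᶠ i in l, Integrable (g i) μ)
    (hfa : Tendsto (fun i => ∫ ω, |f i ω - a| ∂μ) l (𝓝 0))
    (hgb : Tendsto (fun i => ∫ ω, |g i ω - b| ∂μ) l (𝓝 0)) :
    Tendsto (fun i => ∫ ω, |f i ω - g i ω| ∂μ) l (𝓝 |a - b|) := by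
  rw [tendsto_iff_norm_sub_tendsto_zero]
  refine squeeze_zero_norm' ?_ (by simpa using hfa.add hgb)
  filter_upwards [hf, hg] with i hfi hgi
  have hfa_int : Integrable (fun ω => |f i ω - a|) μ := (hfi.sub (integrable_const a)).abs
  have hgb_int : Integrable (fun ω => |g i ω - b|) μ := (hgi.sub (integrable_const b)).abs
  have hfg_int : Integrable (fun ω => |f i ω - g i ω|) μ := (hfi.sub hgi).abs
  calc ‖‖(∫ ω, |f i ω - g i ω| ∂μ) - |a - b|‖‖
      = |∫ ω, (|f i ω - g i ω| - |a - b|) ∂μ| := by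
        rw [norm_norm, Real.norm_eq_abs, integral_sub hfg_int (integrable_const _),
          integral_const, probReal_univ, one_smul]
    _ ≤ ∫ ω, |(|f i ω - g i ω| - |a - b|)| ∂μ := abs_integral_le_integral_abs
    _ ≤ ∫ ω, (|f i ω - a| + |g i ω - b|) ∂μ := by
        refine integral_mono (hfg_int.sub (integrable_const _)).abs (hfa_int.add hgb_int)
          fun ω => ?_
        calc |(|f i ω - g i ω| - |a - b|)| ≤ |(f i ω - g i ω) - (a - b)| :=
              abs_abs_sub_abs_le_abs_sub _ _
          _ = |(f i ω - a) - (g i ω - b)| := by ring_nf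
          _ ≤ |f i ω - a| + |g i ω - b| := abs_sub _ _
    _ = (∫ ω, |f i ω - a| ∂μ) + ∫ ω, |g i ω - b| ∂μ := integral_add hfa_int hgb_int

end Concentration

end ProbabilityTheory

theorem tendsto_expected_normalized_abs_diff_general
    {Ω : Type*} [MeasurableSpace Ω] (μ : Measure Ω) [IsProbabilityMeasure μ]
    (lam1 lam2 : ℝ) (hlam1 : 0 < lam1) (hlam12 : lam1 < lam2)
    (X Y : ℕ → Ω → ℝ)
    (hX : ∀ k, 1 ≤ k → Measurable (X k)) (hY : ∀ k, 1 ≤ k → Measurable (Y k))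
    (hXlaw : ∀ k, 1 ≤ k → μ.map (X k) = gammaMeasure k lam1)
    (hYlaw : ∀ k, 1 ≤ k → μ.map (Y k) = gammaMeasure k lam2) :
    Tendsto (fun k : ℕ => ∫ ω, |X k ω - Y k ω| / k ∂μ) atTop
      (nhds (1 / lam1 - 1 / lam2)) := by
  have hlam2 : 0 < lam2 := hlam1.trans hlam12
  have hXlaw' : ∀ᶠ k : ℕ in atTop, HasLaw (X k) (gammaMeasure k lam1) μ :=
    (eventually_ge_atTop 1).mono fun k hk => ⟨(hX k hk).aemeasurable, hXlaw k hk⟩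
  have hYlaw' : ∀ᶠ k : ℕ in atTop, HasLaw (Y k) (gammaMeasure k lam2) μ :=
    (eventually_ge_atTop 1).mono fun k hk => ⟨(hY k hk).aemeasurable, hYlaw k hk⟩
  have hintegrable {r : ℝ} (hr : 0 < r) {Z : ℕ → Ω → ℝ}
      (hZ : ∀ᶠ k : ℕ in atTop, HasLaw (Z k) (gammaMeasure k r) μ) :
      ∀ᶠ k : ℕ in atTop, Integrable (fun ω => Z k ω / k) μ := by
    filter_upwards [hZ, eventually_gt_atTop 0] with k hZk hk
    exact ((hZk.memLp_two_of_gammaMeasure (Nat.cast_pos.2 hk) hr).integrable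
      one_le_two).div_const _
  have hlim := tendsto_integral_abs_sub_of_tendsto_integral_abs_sub_const
    (hintegrable hlam1 hXlaw') (hintegrable hlam2 hYlaw')
    (tendsto_integral_abs_div_sub_of_hasLaw_gammaMeasure hlam1 hXlaw')
    (tendsto_integral_abs_div_sub_of_hasLaw_gammaMeasure hlam2 hYlaw')
  rw [abs_of_nonneg (sub_nonneg.2 (one_div_le_one_div_of_le hlam1 hlam12.le))] at hlim
  refine hlim.congr fun k => integral_congr_ae (.of_forall fun ω => ?_)
  simp only [← sub_div, abs_div, Nat.abs_cast]

theorem tendsto_expected_normalized_abs_diff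
    {Ω : Type*} [MeasurableSpace Ω] (μ : Measure Ω) [IsProbabilityMeasure μ]
    (lam1 lam2 : ℝ) (hlam1 : 0 < lam1) (hlam12 : lam1 < lam2)
    (X Y : ℕ → Ω → ℝ)
    (hX : ∀ k, 1 ≤ k → Measurable (X k)) (hY : ∀ k, 1 ≤ k → Measurable (Y k))
    (hindep : ∀ k, 1 ≤ k → IndepFun (X k) (Y k) μ)
    (hXlaw : ∀ k, 1 ≤ k → μ.map (X k) = gammaMeasure k lam1)
    (hYlaw : ∀ k, 1 ≤ k → μ.map (Y k) = gammaMeasure k lam2) :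
    Tendsto (fun k : ℕ => ∫ ω, |X k ω - Y k ω| / k ∂μ) atTop
      (nhds (1 / lam1 - 1 / lam2)) :=
  tendsto_expected_normalized_abs_diff_general μ lam1 lam2 hlam1 hlam12 X Y hX hY hXlaw hYlaw
end

section
/- Let 0 < λ1 < λ2. For each integer k ≥ 1, let X_k and Y_k be independent real random variables, where X_k has the Gamma distribution with shape k and rate λ1 and Y_k has the Gamma distribution with shape k and rate λ2. Then lim_{k→∞} P(X_k < Y_k) = 0. -/
/-!
Chernoff bound: for `t ≥ 0`, `P(X < Y) ≤ E[exp(-tX)] E[exp(tY)]` by independence, and the Laplace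
transform of the Gamma law of shape `a` and rate `r` is `(r / (r + t)) ^ a`. Taking
`t = (λ₂ - λ₁) / 2` gives `P(X_k < Y_k) ≤ q ^ k` with `q = 4 λ₁ λ₂ / (λ₁ + λ₂) ^ 2 < 1` by AM-GM.
-/

open MeasureTheory ProbabilityTheory Filter

lemma gammaPDF_mul_exp_neg_mul {a r t : ℝ} (hr : 0 ≤ r) (hrt : 0 < r + t) (x : ℝ) :
    gammaPDF a r x * ENNReal.ofReal (Real.exp (-t * x))
      = ENNReal.ofReal ((r / (r + t)) ^ a) * gammaPDF a (r + t) x := by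
  rcases le_or_gt 0 x with hx | hx
  · rw [gammaPDF_of_nonneg hx, gammaPDF_of_nonneg hx,
      ← ENNReal.ofReal_mul' (Real.exp_nonneg _), ← ENNReal.ofReal_mul (by positivity)]
    have hpow : (r / (r + t)) ^ a * (r + t) ^ a = r ^ a := by
      rw [← Real.mul_rpow (by positivity) hrt.le, div_mul_cancel₀ _ hrt.ne']
    have hexp : Real.exp (-(r * x)) * Real.exp (-t * x) = Real.exp (-((r + t) * x)) := by
      rw [← Real.exp_add]; ring_nf
    rw [← hpow, ← hexp]; ring_nf
  · rw [gammaPDF_of_neg hx, gammaPDF_of_neg hx, zero_mul, mul_zero]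

lemma lintegral_exp_neg_mul_gammaMeasure {a r t : ℝ} (ha : 0 < a) (hr : 0 ≤ r) (hrt : 0 < r + t) :
    ∫⁻ x, ENNReal.ofReal (Real.exp (-t * x)) ∂gammaMeasure a r
      = ENNReal.ofReal ((r / (r + t)) ^ a) := by
  have hpdf (r : ℝ) : Measurable (gammaPDF a r) := (measurable_gammaPDFReal a r).ennreal_ofReal
  rw [gammaMeasure, lintegral_withDensity_eq_lintegral_mul _ (hpdf r) (by fun_prop)]
  simp_rw [Pi.mul_apply, gammaPDF_mul_exp_neg_mul hr hrt]
  rw [lintegral_const_mul _ (hpdf (r + t)), lintegral_gammaPDF_eq_one ha hrt, mul_one]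

section Chernoff

variable {Ω : Type*} [MeasurableSpace Ω] {μ : Measure Ω} {X Y : Ω → ℝ}

lemma aemeasurable_of_map_eq_gammaMeasure {a r : ℝ} (ha : 0 < a) (hr : 0 < r)
    (hX : μ.map X = gammaMeasure a r) : AEMeasurable X μ :=
  .of_map_ne_zero <| hX ▸ (isProbabilityMeasure_gammaMeasure ha hr).ne_zero

lemma measure_lt_le_lintegral_exp_mul (hX : AEMeasurable X μ) (hY : AEMeasurable Y μ) {t : ℝ}
    (ht : 0 ≤ t) :
    μ {ω | X ω < Y ω} ≤
      ∫⁻ ω, ENNReal.ofReal (Real.exp (-t * X ω)) * ENNReal.ofReal (Real.exp (-(-t) * Y ω)) ∂μ := by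
  have hexp : ∀ ω, ENNReal.ofReal (Real.exp (-t * X ω)) * ENNReal.ofReal (Real.exp (-(-t) * Y ω))
      = ENNReal.ofReal (Real.exp (t * (Y ω - X ω))) := fun ω => by
    rw [← ENNReal.ofReal_mul (Real.exp_nonneg _), ← Real.exp_add]; ring_nf
  simp_rw [hexp]
  calc μ {ω | X ω < Y ω} ≤ μ {ω | 1 ≤ ENNReal.ofReal (Real.exp (t * (Y ω - X ω)))} :=
        measure_mono fun ω (h : X ω < Y ω) => ENNReal.one_le_ofReal.mpr <|
          Real.one_le_exp <| mul_nonneg ht (sub_nonneg.mpr h.le)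
    _ = 1 * μ {ω | 1 ≤ ENNReal.ofReal (Real.exp (t * (Y ω - X ω)))} := (one_mul _).symm
    _ ≤ _ := mul_meas_ge_le_lintegral₀ (by fun_prop) 1

lemma measure_lt_le_mul_lintegral_exp (hX : AEMeasurable X μ) (hY : AEMeasurable Y μ)
    (hXY : IndepFun X Y μ) {t : ℝ} (ht : 0 ≤ t) :
    μ {ω | X ω < Y ω} ≤ (∫⁻ ω, ENNReal.ofReal (Real.exp (-t * X ω)) ∂μ) *
      ∫⁻ ω, ENNReal.ofReal (Real.exp (-(-t) * Y ω)) ∂μ := by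
  have hexp : ∀ s : ℝ, Measurable fun x : ℝ => ENNReal.ofReal (Real.exp (-s * x)) :=
    fun s => by fun_prop
  exact (measure_lt_le_lintegral_exp_mul hX hY ht).trans_eq <|
    lintegral_mul_eq_lintegral_mul_lintegral_of_indepFun' ((hexp t).comp_aemeasurable hX)
      ((hexp (-t)).comp_aemeasurable hY) (hXY.comp (hexp t) (hexp (-t)))

lemma measure_lt_le_of_map_eq_gammaMeasure (hXY : IndepFun X Y μ) {a r₁ r₂ : ℝ} (ha : 0 < a)
    (hr₁ : 0 < r₁) (hr₁₂ : r₁ ≤ r₂) (hXlaw : μ.map X = gammaMeasure a r₁)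
    (hYlaw : μ.map Y = gammaMeasure a r₂) :
    μ {ω | X ω < Y ω} ≤ ENNReal.ofReal ((4 * r₁ * r₂ / (r₁ + r₂) ^ 2) ^ a) := by
  have hr₂ : 0 < r₂ := hr₁.trans_le hr₁₂
  have hX := aemeasurable_of_map_eq_gammaMeasure ha hr₁ hXlaw
  have hY := aemeasurable_of_map_eq_gammaMeasure ha hr₂ hYlaw
  -- shifting both rates to their mean `(r₁ + r₂) / 2` gives the two Laplace transforms below
  set t := (r₂ - r₁) / 2
  have hm₁ : r₁ + t = (r₁ + r₂) / 2 := by ring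
  have hm₂ : r₂ + -t = (r₁ + r₂) / 2 := by ring
  have hlaplace {Z : Ω → ℝ} {r s : ℝ} (hZ : AEMeasurable Z μ) (hZlaw : μ.map Z = gammaMeasure a r)
      (hr : 0 ≤ r) (hrs : r + s = (r₁ + r₂) / 2) :
      ∫⁻ ω, ENNReal.ofReal (Real.exp (-s * Z ω)) ∂μ
        = ENNReal.ofReal ((r / ((r₁ + r₂) / 2)) ^ a) := by
    rw [← lintegral_map' (f := fun x => ENNReal.ofReal (Real.exp (-s * x))) (by fun_prop) hZ, hZlaw, ← hrs,
      lintegral_exp_neg_mul_gammaMeasure ha hr (by rw [hrs]; positivity)]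
  calc μ {ω | X ω < Y ω}
      ≤ ENNReal.ofReal ((r₁ / ((r₁ + r₂) / 2)) ^ a) * ENNReal.ofReal ((r₂ / ((r₁ + r₂) / 2)) ^ a) := by
        rw [← hlaplace hX hXlaw hr₁.le hm₁, ← hlaplace hY hYlaw hr₂.le hm₂]
        exact measure_lt_le_mul_lintegral_exp hX hY hXY (div_nonneg (sub_nonneg.mpr hr₁₂) zero_le_two)
    _ = ENNReal.ofReal ((4 * r₁ * r₂ / (r₁ + r₂) ^ 2) ^ a) := by
        rw [← ENNReal.ofReal_mul (by positivity), ← Real.mul_rpow (by positivity) (by positivity)]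
        congr 2
        field_simp
        ring

end Chernoff

theorem tendsto_prob_lt_zero_general
    {Ω : Type*} [MeasurableSpace Ω] (μ : Measure Ω)
    (lam1 lam2 : ℝ) (hlam1 : 0 < lam1) (hlam12 : lam1 < lam2)
    (X Y : ℕ → Ω → ℝ)
    (hindep : ∀ k, 1 ≤ k → IndepFun (X k) (Y k) μ)
    (hXlaw : ∀ k, 1 ≤ k → μ.map (X k) = gammaMeasure k lam1)
    (hYlaw : ∀ k, 1 ≤ k → μ.map (Y k) = gammaMeasure k lam2) :
    Tendsto (fun k : ℕ => μ {ω | X k ω < Y k ω}) atTop (nhds 0) := by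
  have hlam2 : 0 < lam2 := hlam1.trans hlam12
  set q := 4 * lam1 * lam2 / (lam1 + lam2) ^ 2
  have hq₀ : 0 ≤ q := by positivity
  have hq₁ : q < 1 := by
    rw [div_lt_one (by positivity)]
    nlinarith [mul_pos (sub_pos.mpr hlam12) (sub_pos.mpr hlam12)]
  have hgeom : Tendsto (fun k : ℕ => ENNReal.ofReal (q ^ k)) atTop (nhds 0) := by
    simpa using ENNReal.tendsto_ofReal (tendsto_pow_atTop_nhds_zero_of_lt_one hq₀ hq₁)
  refine tendsto_of_tendsto_of_tendsto_of_le_of_le' tendsto_const_nhds hgeom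
    (.of_forall fun k => zero_le) ?_
  filter_upwards [eventually_ge_atTop 1] with k hk
  simpa only [Real.rpow_natCast] using measure_lt_le_of_map_eq_gammaMeasure (hindep k hk)
    (Nat.cast_pos.mpr hk) hlam1 hlam12.le (hXlaw k hk) (hYlaw k hk)

theorem tendsto_prob_lt_zero
    {Ω : Type*} [MeasurableSpace Ω] (μ : Measure Ω) [IsProbabilityMeasure μ]
    (lam1 lam2 : ℝ) (hlam1 : 0 < lam1) (hlam12 : lam1 < lam2)
    (X Y : ℕ → Ω → ℝ)
    (hX : ∀ k, 1 ≤ k → Measurable (X k)) (hY : ∀ k, 1 ≤ k → Measurable (Y k))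
    (hindep : ∀ k, 1 ≤ k → IndepFun (X k) (Y k) μ)
    (hXlaw : ∀ k, 1 ≤ k → μ.map (X k) = gammaMeasure k lam1)
    (hYlaw : ∀ k, 1 ≤ k → μ.map (Y k) = gammaMeasure k lam2) :
    Tendsto (fun k : ℕ => μ {ω | X k ω < Y k ω}) atTop (nhds 0) :=
  tendsto_prob_lt_zero_general μ lam1 lam2 hlam1 hlam12 X Y hindep hXlaw hYlaw
end

section
/- Let λ1, λ2 > 0 and Δt ≥ 0. Let X and Y be independent real random variables, where X has the exponential distribution with rate λ1 and Y has the exponential distribution with rate λ2. Then E[|X + Δt − Y|] = (1/λ1 − 1/λ2 + Δt)·(1 − 2e^{−λ2·Δt}) + 2e^{−λ2·Δt}·( λ2/(λ1·(λ1 + λ2)) + Δt ). -/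
/-!
By independence the law of `(X, Y)` is the product of the two exponential laws. For `a ≥ 0` and
`Y ~ Exp(r)` write `|a - Y| = (a - Y) + 2 (Y - a)⁺`; memorylessness gives `E (Y - a)⁺ = e^{-ra} / r`,
so `E |a - Y| = a - 1/r + 2 e^{-ra} / r`. Integrating this at `a = x + Δt` against `Exp(λ₁)` only
needs the mean `1/λ₁` and the Laplace transform `E e^{-sX} = λ₁ / (λ₁ + s)`. All the integrals
reduce to `∫_{(a,∞)} (x - a) e^{-rx} dx = e^{-ra} / r²` and `∫_{(a,∞)} e^{-rx} dx`.
-/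

open MeasureTheory ProbabilityTheory Real Set Filter Topology

section ExpIntegrals
variable {r : ℝ}

lemma hasDerivAt_antideriv_sub_mul_exp_neg_mul (hr : r ≠ 0) (a x : ℝ) :
    HasDerivAt (fun x => -(r * (x - a) + 1) * exp (-(r * x)) / r ^ 2)
      ((x - a) * exp (-(r * x))) x := by
  have hlin : HasDerivAt (fun x => -(r * (x - a) + 1)) (-r) x := by
    simpa using ((((hasDerivAt_id x).sub_const a).const_mul r).add_const 1).fun_neg
  have hexp : HasDerivAt (fun x => exp (-(r * x))) (-r * exp (-(r * x))) x := by
    simpa [mul_comm] using ((hasDerivAt_id x).const_mul r).neg.exp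
  refine ((hlin.fun_mul hexp).div_const (r ^ 2)).congr_deriv ?_
  field_simp
  ring

lemma tendsto_antideriv_sub_mul_exp_neg_mul (hr : 0 < r) (a : ℝ) :
    Tendsto (fun x => -(r * (x - a) + 1) * exp (-(r * x)) / r ^ 2) atTop (𝓝 0) := by
  have h₁ := tendsto_rpow_mul_exp_neg_mul_atTop_nhds_zero 1 r hr
  have h₀ := tendsto_rpow_mul_exp_neg_mul_atTop_nhds_zero 0 r hr
  simp only [rpow_one, rpow_zero, one_mul] at h₁ h₀
  convert (h₁.const_mul (-r⁻¹)).add (h₀.const_mul ((r * a - 1) / r ^ 2)) using 2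
  · field_simp
    ring
  · simp

lemma integrableOn_Ioi_sub_mul_exp_neg_mul (hr : 0 < r) (a : ℝ) :
    IntegrableOn (fun x => (x - a) * exp (-(r * x))) (Ioi a) :=
  integrableOn_Ioi_deriv_of_nonneg'
    (fun x _ => hasDerivAt_antideriv_sub_mul_exp_neg_mul hr.ne' a x)
    (fun _ hx => mul_nonneg (sub_nonneg.2 (le_of_lt hx)) (exp_nonneg _))
    (tendsto_antideriv_sub_mul_exp_neg_mul hr a)

lemma integral_Ioi_sub_mul_exp_neg_mul (hr : 0 < r) (a : ℝ) :
    ∫ x in Ioi a, (x - a) * exp (-(r * x)) = exp (-(r * a)) / r ^ 2 := by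
  rw [integral_Ioi_of_hasDerivAt_of_nonneg'
    (fun x _ => hasDerivAt_antideriv_sub_mul_exp_neg_mul hr.ne' a x)
    (fun _ hx => mul_nonneg (sub_nonneg.2 (le_of_lt hx)) (exp_nonneg _))
    (tendsto_antideriv_sub_mul_exp_neg_mul hr a)]
  ring

end ExpIntegrals

namespace ProbabilityTheory

section ExpMeasure
variable {r : ℝ}

lemma expMeasure_eq_withDensity :
    expMeasure r = volume.withDensity (fun x => (exponentialPDFReal r x).toNNReal) := rfl

lemma exponentialPDFReal_smul_eq_indicator (hr : 0 ≤ r) (g : ℝ → ℝ) :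
    (fun x => (exponentialPDFReal r x).toNNReal • g x) =
      (Ici 0).indicator (fun x => g x * (r * exp (-(r * x)))) := by
  ext x
  by_cases hx : 0 ≤ x
  · rw [indicator_of_mem (mem_Ici.2 hx), NNReal.smul_def, smul_eq_mul, exponentialPDFReal, gammaPDFReal,
      if_pos hx, Real.coe_toNNReal _ (by positivity)]
    simp only [rpow_one, Gamma_one, div_one, sub_self, rpow_zero, mul_one]
    ring
  · simp [exponentialPDFReal, gammaPDFReal, hx]

lemma integral_expMeasure (hr : 0 ≤ r) (g : ℝ → ℝ) :
    ∫ x, g x ∂expMeasure r = ∫ x in Ioi 0, g x * (r * exp (-(r * x))) := by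
  rw [expMeasure_eq_withDensity, integral_withDensity_eq_integral_smul
    (measurable_exponentialPDFReal r).real_toNNReal, exponentialPDFReal_smul_eq_indicator hr,
    integral_indicator measurableSet_Ici, integral_Ici_eq_integral_Ioi]

lemma integrable_expMeasure_iff (hr : 0 ≤ r) {g : ℝ → ℝ} :
    Integrable g (expMeasure r) ↔ IntegrableOn (fun x => g x * (r * exp (-(r * x)))) (Ioi 0) := by
  rw [expMeasure_eq_withDensity, integrable_withDensity_iff_integrable_smul
    (measurable_exponentialPDFReal r).real_toNNReal, exponentialPDFReal_smul_eq_indicator hr,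
    integrable_indicator_iff measurableSet_Ici, integrableOn_Ici_iff_integrableOn_Ioi]

lemma ae_nonneg_expMeasure : ∀ᵐ x ∂expMeasure r, 0 ≤ x := by
  rw [ae_iff]
  simp only [not_le]
  change expMeasure r (Iio 0) = 0
  rw [expMeasure, gammaMeasure, withDensity_apply _ measurableSet_Iio]
  exact lintegral_exponentialPDF_of_nonpos le_rfl

lemma integrable_id_expMeasure (hr : 0 < r) : Integrable (fun x => x) (expMeasure r) := by
  rw [integrable_expMeasure_iff hr.le]
  exact IntegrableOn.congr_fun ((integrableOn_Ioi_sub_mul_exp_neg_mul hr 0).const_mul r)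
    (fun x _ => by ring) measurableSet_Ioi

lemma integral_id_expMeasure (hr : 0 < r) : ∫ x, x ∂expMeasure r = 1 / r := by
  have h (x : ℝ) : x * (r * exp (-(r * x))) = r * ((x - 0) * exp (-(r * x))) := by ring
  simp only [integral_expMeasure hr.le, h, integral_const_mul,
    integral_Ioi_sub_mul_exp_neg_mul hr, mul_zero, neg_zero, exp_zero]
  field_simp

lemma exp_neg_mul_mul_exp_neg_mul (s r x : ℝ) :
    exp (-(s * x)) * (r * exp (-(r * x))) = r * exp (-(r + s) * x) := by
  rw [mul_left_comm, ← exp_add]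
  ring_nf

lemma integrable_exp_neg_mul_expMeasure {s : ℝ} (hr : 0 ≤ r) (hrs : 0 < r + s) :
    Integrable (fun x => exp (-(s * x))) (expMeasure r) := by
  simp only [integrable_expMeasure_iff hr, exp_neg_mul_mul_exp_neg_mul]
  exact (integrableOn_exp_mul_Ioi (neg_neg_of_pos hrs) 0).const_mul r

lemma integral_exp_neg_mul_expMeasure {s : ℝ} (hr : 0 ≤ r) (hrs : 0 < r + s) :
    ∫ x, exp (-(s * x)) ∂expMeasure r = r / (r + s) := by
  simp only [integral_expMeasure hr, exp_neg_mul_mul_exp_neg_mul, integral_const_mul,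
    integral_exp_mul_Ioi (neg_neg_of_pos hrs), mul_zero, exp_zero]
  field_simp

lemma integral_max_sub_zero_expMeasure (hr : 0 < r) {a : ℝ} (ha : 0 ≤ a) :
    ∫ x, max (x - a) 0 ∂expMeasure r = exp (-(r * a)) / r := by
  rw [integral_expMeasure hr.le, setIntegral_eq_of_subset_of_forall_sdiff_eq_zero
    measurableSet_Ioi (Ioi_subset_Ioi ha)]
  · rw [setIntegral_congr_fun measurableSet_Ioi (g := fun x => r * ((x - a) * exp (-(r * x))))
      (fun x hx => by rw [max_eq_left (sub_nonneg.2 (le_of_lt hx))]; ring),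
      integral_const_mul, integral_Ioi_sub_mul_exp_neg_mul hr]
    field_simp
  · intro x hx
    rw [max_eq_right (sub_nonpos.2 (not_lt.1 hx.2)), zero_mul]

lemma integral_abs_sub_expMeasure (hr : 0 < r) {a : ℝ} (ha : 0 ≤ a) :
    ∫ x, |a - x| ∂expMeasure r = a - 1 / r + 2 * exp (-(r * a)) / r := by
  have := isProbabilityMeasure_expMeasure hr
  have h (x : ℝ) : |a - x| = a - x + 2 * max (x - a) 0 := by
    rcases le_total x a with hxa | hax
    · rw [abs_of_nonneg (sub_nonneg.2 hxa), max_eq_right (sub_nonpos.2 hxa)]; ring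
    · rw [abs_of_nonpos (sub_nonpos.2 hax), max_eq_left (sub_nonneg.2 hax)]; ring
  have hid := integrable_id_expMeasure hr
  have hlin : Integrable (fun x => a - x) (expMeasure r) := (integrable_const a).sub hid
  have hpos : Integrable (fun x => max (x - a) 0) (expMeasure r) :=
    (hid.sub (integrable_const a)).pos_part
  simp only [h]
  rw [integral_add hlin (hpos.const_mul 2),
    integral_sub (integrable_const a) hid, integral_const_mul, integral_id_expMeasure hr,
    integral_max_sub_zero_expMeasure hr ha]
  simp only [integral_const, probReal_univ, smul_eq_mul, one_mul]
  ring

end ExpMeasure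

lemma integral_abs_add_sub_prod_expMeasure {r₁ r₂ c : ℝ} (hr₁ : 0 < r₁) (hr₂ : 0 < r₂)
    (hc : 0 ≤ c) :
    ∫ p, |p.1 + c - p.2| ∂(expMeasure r₁).prod (expMeasure r₂) =
      1 / r₁ + c - 1 / r₂ + 2 * exp (-(r₂ * c)) / r₂ * (r₁ / (r₁ + r₂)) := by
  have := isProbabilityMeasure_expMeasure hr₁
  have := isProbabilityMeasure_expMeasure hr₂
  have hid₁ := integrable_id_expMeasure hr₁
  have hint : Integrable (fun p : ℝ × ℝ => |p.1 + c - p.2|)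
      ((expMeasure r₁).prod (expMeasure r₂)) :=
    (((hid₁.comp_fst _).add (integrable_const c)).sub
      ((integrable_id_expMeasure hr₂).comp_snd _)).abs
  have hinner : (fun x => ∫ y, |x + c - y| ∂expMeasure r₂) =ᵐ[expMeasure r₁]
      fun x => x + (c - 1 / r₂) + 2 * exp (-(r₂ * c)) / r₂ * exp (-(r₂ * x)) := by
    filter_upwards [ae_nonneg_expMeasure] with x hx
    rw [integral_abs_sub_expMeasure hr₂ (by linarith), mul_add, neg_add, exp_add]
    ring
  have hexp := integrable_exp_neg_mul_expMeasure hr₁.le (add_pos hr₁ hr₂)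
  rw [integral_prod _ hint, integral_congr_ae hinner,
    integral_add (f := fun x => x + (c - 1 / r₂)) (hid₁.add (integrable_const _))
      (hexp.const_mul _),
    integral_add hid₁ (integrable_const _), integral_const_mul, integral_id_expMeasure hr₁,
    integral_const, integral_exp_neg_mul_expMeasure hr₁.le (add_pos hr₁ hr₂)]
  simp only [probReal_univ, smul_eq_mul, one_mul]
  ring

end ProbabilityTheory

theorem expected_abs_shifted_diff_exponential
    {Ω : Type*} [MeasurableSpace Ω] (μ : Measure Ω) [IsProbabilityMeasure μ]
    (lam1 lam2 : ℝ) (hlam1 : 0 < lam1) (hlam2 : 0 < lam2)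
    (Δt : ℝ) (hΔt : 0 ≤ Δt)
    (X Y : Ω → ℝ) (hX : Measurable X) (hY : Measurable Y)
    (hindep : IndepFun X Y μ)
    (hXlaw : μ.map X = expMeasure lam1)
    (hYlaw : μ.map Y = expMeasure lam2) :
    (∫ ω, |X ω + Δt - Y ω| ∂μ) =
      (1 / lam1 - 1 / lam2 + Δt) * (1 - 2 * Real.exp (-lam2 * Δt)) +
        2 * Real.exp (-lam2 * Δt) * (lam2 / (lam1 * (lam1 + lam2)) + Δt) := by
  have hlaw : μ.map (fun ω => (X ω, Y ω)) = (expMeasure lam1).prod (expMeasure lam2) := by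
    rw [← hXlaw, ← hYlaw]
    exact (indepFun_iff_map_prod_eq_prod_map_map hX.aemeasurable hY.aemeasurable).mp hindep
  calc ∫ ω, |X ω + Δt - Y ω| ∂μ
      = ∫ p, |p.1 + Δt - p.2| ∂(expMeasure lam1).prod (expMeasure lam2) := by
        rw [← hlaw, integral_map (hX.prodMk hY).aemeasurable (by fun_prop)]
    _ = _ := by
        rw [integral_abs_add_sub_prod_expMeasure hlam1 hlam2 hΔt, neg_mul]
        field_simp
        ring
end

section
/- Let λ1, λ2 > 0, let k, l ≥ 1 be integers, and let Δt ≥ 0. Let X and Y be independent real random variables, where X has the Gamma distribution with shape k and rate λ1 and Y has the Gamma distribution with shape l and rate λ2. Then E[|X + Δt − Y|] = (k/λ1 − l/λ2 + Δt)·(1 − 2e^{−λ2·Δt}·Σ_{j=0}^{l−1} (λ2·Δt)^j/j!) + 2e^{−λ2·Δt}·[ Σ_{i=0}^{k−1} Σ_{j=0}^{l−1} C(i+j, i) · ((λ2·Δt)^{l−1−j}/(l−1−j)!) · ((k − i)·λ1^{i−1}·λ2^{j+1}/(λ1 + λ2)^{i+j+1}) + Δt·(λ2·Δt)^{l−1}/(l−1)!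 ]. -/
/-!
Write `Z = X + Δt - Y`, so that `|Z| = Z + 2 (-Z)⁺` and `E Z = k/λ₁ + Δt - l/λ₂`. By independence,
`E (Y - Δt - X)⁺ = ∫ ψ dΓ(l, λ₂)` with `ψ y = E (y - Δt - X)⁺`, which vanishes for `y ≤ Δt` and
equals `b - k/λ₁ + E (X - b)⁺` at `b = y - Δt > 0`.

For Erlang variables everything is explicit because `e^{-t} ∑_{m ≤ n} t^m/m!` is an antiderivative
of `-e^{-t} tⁿ/n!`: tails and the stop-loss `E (X - b)⁺` are polynomials in `b` times `e^{-λb}`.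
Integrating `ψ` against the Erlang density shifted by `Δt`, after a binomial expansion of
`(u + Δt)^{l-1}`, leaves the integrals
`∫₀^∞ uⁱ/i! · uʲ/j! · e^{-(λ₁+λ₂)u} du = C(i+j, i) / (λ₁+λ₂)^{i+j+1}`, which give the double sum.
-/

open MeasureTheory ProbabilityTheory Real Set Filter Topology
open scoped Nat ENNReal

lemma MeasureTheory.integral_abs_eq_integral_add_two_mul_integral_max_neg {α : Type*}
    [MeasurableSpace α] {μ : Measure α} {f : α → ℝ} (hf : Integrable f μ) :
    ∫ a, |f a| ∂μ = ∫ a, f a ∂μ + 2 * ∫ a, max (-f a) 0 ∂μ := by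
  have h : ∀ a, |f a| = f a + 2 * max (-f a) 0 := fun a => by
    linarith [max_zero_add_max_neg_zero_eq_abs_self (f a), max_zero_sub_eq_self (f a)]
  simp only [h]
  rw [integral_add hf (by exact hf.neg.pos_part.const_mul 2), integral_const_mul]

lemma MeasureTheory.setIntegral_Ioi_eq_comp_add (g : ℝ → ℝ) (d : ℝ) :
    ∫ y in Ioi d, g y = ∫ u in Ioi 0, g (u + d) := by
  have := (measurePreserving_add_right volume d).setIntegral_preimage_emb
    (measurableEmbedding_addRight d) g (Ioi d)
  rwa [preimage_add_const_Ioi, sub_self, eq_comm] at this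

lemma MeasureTheory.integrableOn_Ioi_iff_comp_add {g : ℝ → ℝ} (d : ℝ) :
    IntegrableOn g (Ioi d) ↔ IntegrableOn (fun u => g (u + d)) (Ioi 0) := by
  have := (measurePreserving_add_right volume d).integrableOn_comp_preimage
    (measurableEmbedding_addRight d) (f := g) (s := Ioi d)
  rwa [preimage_add_const_Ioi, sub_self, Iff.comm] at this

lemma ProbabilityTheory.HasLaw.integrable_comp_iff {Ω 𝓧 : Type*} {mΩ : MeasurableSpace Ω}
    {m𝓧 : MeasurableSpace 𝓧} {X : Ω → 𝓧} {μ : Measure 𝓧} {P : Measure Ω} (hX : HasLaw X μ P)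
    {f : 𝓧 → ℝ} (hf : AEStronglyMeasurable f μ) : Integrable (f ∘ X) P ↔ Integrable f μ := by
  rw [← hX.map_eq] at hf ⊢
  exact (integrable_map_measure hf hX.aemeasurable).symm

lemma ProbabilityTheory.IndepFun.integral_comp_eq_integral_integral {Ω α β : Type*}
    {mΩ : MeasurableSpace Ω} {mα : MeasurableSpace α} {mβ : MeasurableSpace β} {P : Measure Ω}
    [IsFiniteMeasure P] {X : Ω → α} {Y : Ω → β} {μ : Measure α} {ν : Measure β}
    (hXY : IndepFun X Y P) (hX : HasLaw X μ P) (hY : HasLaw Y ν P) {g : α × β → ℝ}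
    (hgm : AEStronglyMeasurable g (μ.prod ν)) (hg : Integrable (fun ω => g (X ω, Y ω)) P) :
    ∫ ω, g (X ω, Y ω) ∂P = ∫ x, ∫ y, g (x, y) ∂ν ∂μ := by
  have : IsFiniteMeasure μ := hX.map_eq ▸ inferInstance
  have : IsFiniteMeasure ν := hY.map_eq ▸ inferInstance
  have hlaw := hXY.hasLaw_prod hX hY
  rw [← integral_prod _ ((hlaw.integrable_comp_iff hgm).1 hg), ← hlaw.integral_comp hgm]
  rfl

namespace ProbabilityTheory

/-- `erlangTail n t = P(Poisson(t) ≤ n)`, the survival function of `Γ(n + 1, 1)` at `t`. -/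
noncomputable def erlangTail (n : ℕ) (t : ℝ) : ℝ :=
  exp (-t) * ∑ m ∈ Finset.range (n + 1), t ^ m / m !

noncomputable def erlangPDF (n : ℕ) (r x : ℝ) : ℝ :=
  r ^ (n + 1) * x ^ n * exp (-(r * x)) / n !

/-- `E (X - b)⁺` for `X ~ Γ(n + 1, r)` and `b ≥ 0`. -/
noncomputable def erlangStopLoss (n : ℕ) (r b : ℝ) : ℝ :=
  (n + 1) / r * erlangTail (n + 1) (r * b) - b * erlangTail n (r * b)

lemma erlangTail_succ (n : ℕ) (t : ℝ) :
    erlangTail (n + 1) t = erlangTail n t + exp (-t) * (t ^ (n + 1) / (n + 1)!) := by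
  rw [erlangTail, Finset.sum_range_succ, mul_add, ← erlangTail]

@[simp]
lemma erlangTail_zero_right (n : ℕ) : erlangTail n 0 = 1 := by
  simp [erlangTail, Finset.sum_range_succ']

lemma hasDerivAt_erlangTail (n : ℕ) (t : ℝ) :
    HasDerivAt (erlangTail n) (-(exp (-t) * (t ^ n / n !))) t := by
  induction n with
  | zero =>
    have h : erlangTail 0 = fun t => exp (-t) := funext fun t => by simp [erlangTail]
    simpa [h] using (hasDerivAt_neg t).exp
  | succ n ih =>
    have hpow : HasDerivAt (fun t : ℝ => t ^ (n + 1) / (n + 1)!) (t ^ n / n !) t := by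
      refine ((hasDerivAt_pow (n + 1) t).div_const ((n + 1)! : ℝ)).congr_deriv ?_
      push_cast [Nat.factorial_succ, Nat.add_sub_cancel]
      field_simp
    rw [show erlangTail (n + 1) = _ from funext (erlangTail_succ n)]
    refine (ih.fun_add ((hasDerivAt_neg t).exp.fun_mul hpow)).congr_deriv ?_
    push_cast [Nat.factorial_succ, pow_succ]
    field_simp
    ring

lemma tendsto_erlangTail_atTop (n : ℕ) : Tendsto (erlangTail n) atTop (𝓝 0) := by
  have h : ∀ m ∈ Finset.range (n + 1),
      Tendsto (fun t : ℝ => t ^ m * exp (-t) / m !) atTop (𝓝 0) := fun m _ => by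
    simpa using (tendsto_pow_mul_exp_neg_atTop_nhds_zero m).div_const (m ! : ℝ)
  convert tendsto_finsetSum _ h using 1
  · ext t
    rw [erlangTail, Finset.mul_sum]
    exact Finset.sum_congr rfl fun m _ => by ring
  · simp

lemma erlangStopLoss_eq_tail (n : ℕ) {r : ℝ} (hr : r ≠ 0) (b : ℝ) :
    erlangStopLoss n r b =
      ((n + 1) / r - b) * erlangTail n (r * b) + exp (-(r * b)) * (b * (r * b) ^ n / n !) := by
  rw [erlangStopLoss, erlangTail_succ]
  push_cast [Nat.factorial_succ, pow_succ]
  field_simp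
  ring

lemma erlangStopLoss_eq_sum (n : ℕ) {r : ℝ} (hr : r ≠ 0) (u : ℝ) :
    erlangStopLoss n r u = ∑ i ∈ Finset.range (n + 1),
      ((n : ℝ) + 1 - i) * r ^ ((i : ℤ) - 1) * (u ^ i / i ! * exp (-(r * u))) := by
  have hshift : u * ∑ m ∈ Finset.range (n + 1), (r * u) ^ m / m ! =
      ∑ m ∈ Finset.range (n + 2), m * (r * u) ^ m / m ! / r := by
    rw [Finset.mul_sum, Finset.sum_range_succ' _ (n + 1)]
    simp only [Nat.cast_zero, zero_mul, zero_div, add_zero]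
    refine Finset.sum_congr rfl fun m _ => ?_
    push_cast [Nat.factorial_succ, pow_succ]
    field_simp
  rw [erlangStopLoss, erlangTail, erlangTail, mul_left_comm u, hshift, Finset.mul_sum,
    Finset.mul_sum, Finset.mul_sum, ← Finset.sum_sub_distrib, Finset.sum_range_succ]
  rw [show (n + 1 : ℝ) / r * (exp (-(r * u)) * ((r * u) ^ (n + 1) / (n + 1)!)) -
      exp (-(r * u)) * ((n + 1 : ℕ) * (r * u) ^ (n + 1) / (n + 1)! / r) = 0 by push_cast; ring,
    add_zero]
  refine Finset.sum_congr rfl fun i _ => ?_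
  rw [zpow_sub_one₀ hr, zpow_natCast, mul_pow]
  field_simp

@[fun_prop]
lemma continuous_erlangPDF (n : ℕ) (r : ℝ) : Continuous (erlangPDF n r) := by
  unfold erlangPDF; fun_prop

lemma erlangPDF_nonneg {n : ℕ} {r x : ℝ} (hr : 0 ≤ r) (hx : 0 ≤ x) : 0 ≤ erlangPDF n r x := by
  unfold erlangPDF; positivity

lemma erlangPDF_mul_self (n : ℕ) {r : ℝ} (hr : r ≠ 0) (x : ℝ) :
    erlangPDF n r x * x = (n + 1) / r * erlangPDF (n + 1) r x := by
  simp only [erlangPDF]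
  push_cast [Nat.factorial_succ, pow_succ]
  field_simp

lemma erlangPDF_add (n : ℕ) (r u d : ℝ) :
    erlangPDF n r (u + d) = ∑ j ∈ Finset.range (n + 1),
      exp (-(r * d)) * r ^ (j + 1) * ((r * d) ^ (n - j) / (n - j)!) *
        (u ^ j / j ! * exp (-(r * u))) := by
  rw [erlangPDF, add_pow, Finset.mul_sum, Finset.sum_mul, Finset.sum_div]
  refine Finset.sum_congr rfl fun j hj => ?_
  have hjn : j ≤ n := Nat.lt_succ_iff.1 (Finset.mem_range.1 hj)
  rw [Nat.cast_choose ℝ hjn, show n + 1 = j + 1 + (n - j) by omega, pow_add, mul_pow,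
    show -(r * (u + d)) = -(r * d) + -(r * u) by ring, exp_add]
  field_simp

lemma pow_mul_exp_mul_pow_mul_exp_eq_erlangPDF (i j : ℕ) {a b : ℝ} (hab : a + b ≠ 0) (u : ℝ) :
    u ^ i / i ! * exp (-(a * u)) * (u ^ j / j ! * exp (-(b * u))) =
      (i + j).choose i / (a + b) ^ (i + j + 1) * erlangPDF (i + j) (a + b) u := by
  rw [erlangPDF, Nat.cast_add_choose, show -((a + b) * u) = -(a * u) + -(b * u) by ring, exp_add]
  field_simp
  ring

lemma erlangPDF_add_mul_erlangStopLoss (k l : ℕ) {r₁ r₂ : ℝ} (hr₁ : r₁ ≠ 0) (hr : r₁ + r₂ ≠ 0)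
    (d u : ℝ) :
    erlangPDF l r₂ (u + d) * erlangStopLoss k r₁ u =
      ∑ i ∈ Finset.range (k + 1), ∑ j ∈ Finset.range (l + 1),
        ((k : ℝ) + 1 - i) * r₁ ^ ((i : ℤ) - 1) *
            (exp (-(r₂ * d)) * r₂ ^ (j + 1) * ((r₂ * d) ^ (l - j) / (l - j)!)) *
          ((i + j).choose i / (r₁ + r₂) ^ (i + j + 1) * erlangPDF (i + j) (r₁ + r₂) u) := by
  rw [mul_comm, erlangStopLoss_eq_sum k hr₁, erlangPDF_add, Finset.sum_mul_sum]
  refine Finset.sum_congr rfl fun i _ => Finset.sum_congr rfl fun j _ => ?_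
  rw [mul_mul_mul_comm, pow_mul_exp_mul_pow_mul_exp_eq_erlangPDF i j hr]

section IntegralsOfErlangPDF

variable (n : ℕ) {r b : ℝ}

lemma hasDerivAt_neg_erlangTail_mul (r x : ℝ) :
    HasDerivAt (fun x => -erlangTail n (r * x)) (erlangPDF n r x) x := by
  refine (((hasDerivAt_erlangTail n (r * x)).comp x
    ((hasDerivAt_id x).const_mul r)).neg).congr_deriv ?_
  simp only [erlangPDF, mul_pow, pow_succ]
  simp
  ring

lemma tendsto_neg_erlangTail_mul (hr : 0 < r) :
    Tendsto (fun x => -erlangTail n (r * x)) atTop (𝓝 0) := by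
  simpa using ((tendsto_erlangTail_atTop n).comp (tendsto_id.const_mul_atTop hr)).neg

lemma integrableOn_Ioi_erlangPDF (hr : 0 < r) (hb : 0 ≤ b) :
    IntegrableOn (erlangPDF n r) (Ioi b) :=
  integrableOn_Ioi_deriv_of_nonneg' (fun x _ ↦ hasDerivAt_neg_erlangTail_mul n r x)
    (fun _ hx => erlangPDF_nonneg hr.le (hb.trans (le_of_lt hx)))
    (tendsto_neg_erlangTail_mul n hr)

lemma integral_Ioi_erlangPDF (hr : 0 < r) (hb : 0 ≤ b) :
    ∫ x in Ioi b, erlangPDF n r x = erlangTail n (r * b) := by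
  rw [integral_Ioi_of_hasDerivAt_of_nonneg' (fun x _ ↦ hasDerivAt_neg_erlangTail_mul n r x)
    (fun _ hx => erlangPDF_nonneg hr.le (hb.trans (le_of_lt hx)))
    (tendsto_neg_erlangTail_mul n hr)]
  ring

lemma integrableOn_Ioi_erlangPDF_mul_sub (hr : 0 < r) (hb : 0 ≤ b) :
    IntegrableOn (fun x => erlangPDF n r x * (x - b)) (Ioi b) := by
  simp only [mul_sub, erlangPDF_mul_self n hr.ne']
  exact ((integrableOn_Ioi_erlangPDF (n + 1) hr hb).const_mul _).sub
    ((integrableOn_Ioi_erlangPDF n hr hb).mul_const _)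

lemma integral_Ioi_erlangPDF_mul_sub (hr : 0 < r) (hb : 0 ≤ b) :
    ∫ x in Ioi b, erlangPDF n r x * (x - b) = erlangStopLoss n r b := by
  simp only [mul_sub, erlangPDF_mul_self n hr.ne']
  rw [integral_sub ((integrableOn_Ioi_erlangPDF (n + 1) hr hb).const_mul _)
    ((integrableOn_Ioi_erlangPDF n hr hb).mul_const _), integral_const_mul, integral_mul_const,
    integral_Ioi_erlangPDF _ hr hb, integral_Ioi_erlangPDF _ hr hb, erlangStopLoss]
  ring

end IntegralsOfErlangPDF

section ShiftedProduct

variable (k l : ℕ) {r₁ r₂ : ℝ}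

lemma integrableOn_Ioi_erlangPDF_mul_erlangStopLoss_sub (hr₁ : 0 < r₁) (hr₂ : 0 < r₂) (d : ℝ) :
    IntegrableOn (fun y => erlangPDF l r₂ y * erlangStopLoss k r₁ (y - d)) (Ioi d) := by
  have hr : 0 < r₁ + r₂ := by positivity
  rw [integrableOn_Ioi_iff_comp_add]
  simp only [add_sub_cancel_right, erlangPDF_add_mul_erlangStopLoss k l hr₁.ne' hr.ne']
  exact integrable_finsetSum _ fun i _ => integrable_finsetSum _ fun j _ =>
    ((integrableOn_Ioi_erlangPDF _ hr le_rfl).const_mul _).const_mul _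

lemma integral_Ioi_erlangPDF_mul_erlangStopLoss_sub (hr₁ : 0 < r₁) (hr₂ : 0 < r₂) (d : ℝ) :
    ∫ y in Ioi d, erlangPDF l r₂ y * erlangStopLoss k r₁ (y - d) =
      exp (-(r₂ * d)) * ∑ i ∈ Finset.range (k + 1), ∑ j ∈ Finset.range (l + 1),
        ((i + j).choose i : ℝ) * ((r₂ * d) ^ (l - j) / (l - j)!) *
          (((k : ℝ) + 1 - i) * r₁ ^ ((i : ℤ) - 1) * r₂ ^ (j + 1) / (r₁ + r₂) ^ (i + j + 1)) := by
  have hr : 0 < r₁ + r₂ := by positivity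
  have hint (m : ℕ) (c c' : ℝ) :=
    ((integrableOn_Ioi_erlangPDF m hr le_rfl).const_mul c).const_mul c'
  rw [setIntegral_Ioi_eq_comp_add]
  simp only [add_sub_cancel_right, erlangPDF_add_mul_erlangStopLoss k l hr₁.ne' hr.ne']
  rw [integral_finsetSum _ fun i _ => integrable_finsetSum _ fun j _ => hint _ _ _,
    Finset.mul_sum]
  refine Finset.sum_congr rfl fun i _ => ?_
  rw [integral_finsetSum _ fun j _ => hint _ _ _, Finset.mul_sum]
  refine Finset.sum_congr rfl fun j _ => ?_
  rw [integral_const_mul, integral_const_mul, integral_Ioi_erlangPDF _ hr le_rfl, mul_zero,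
    erlangTail_zero_right]
  ring

end ShiftedProduct

lemma gammaPDFReal_natCast_succ (n : ℕ) (r : ℝ) {x : ℝ} (hx : 0 ≤ x) :
    gammaPDFReal ((n + 1 : ℕ) : ℝ) r x = erlangPDF n r x := by
  rw [gammaPDFReal, if_pos hx, Nat.cast_add_one, Real.Gamma_nat_eq_factorial,
    add_sub_cancel_right, ← Nat.cast_add_one, Real.rpow_natCast, Real.rpow_natCast, erlangPDF]
  ring

lemma gammaMeasure_natCast_succ (n : ℕ) (r : ℝ) :
    gammaMeasure ((n + 1 : ℕ) : ℝ) r =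
      (volume.restrict (Ioi 0)).withDensity fun x => ENNReal.ofReal (erlangPDF n r x) := by
  rw [← withDensity_indicator measurableSet_Ioi, gammaMeasure]
  refine withDensity_congr_ae ?_
  filter_upwards [compl_mem_ae_iff.mpr (measure_singleton (0 : ℝ))] with x hx
  rcases (Ne.symm hx).lt_or_gt with hx | hx
  · rw [gammaPDF, indicator_of_mem (mem_Ioi.2 hx), gammaPDFReal_natCast_succ n r hx.le]
  · rw [gammaPDF, gammaPDFReal, if_neg hx.not_ge, ENNReal.ofReal_zero,
      indicator_of_notMem (notMem_Ioi.2 hx.le)]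

section GammaMeasure

variable (n : ℕ) {r : ℝ}

lemma integral_gammaMeasure_natCast_succ (hr : 0 < r) (f : ℝ → ℝ) :
    ∫ x, f x ∂gammaMeasure ((n + 1 : ℕ) : ℝ) r = ∫ x in Ioi 0, erlangPDF n r x * f x := by
  rw [gammaMeasure_natCast_succ, integral_withDensity_eq_integral_toReal_smul (by fun_prop)
    (ae_of_all _ fun _ => ENNReal.ofReal_lt_top)]
  refine setIntegral_congr_fun measurableSet_Ioi fun x hx => ?_
  rw [ENNReal.toReal_ofReal (erlangPDF_nonneg hr.le (le_of_lt hx)), smul_eq_mul]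

lemma integrable_gammaMeasure_natCast_succ_iff (hr : 0 < r) {f : ℝ → ℝ} :
    Integrable f (gammaMeasure ((n + 1 : ℕ) : ℝ) r) ↔
      IntegrableOn (fun x => erlangPDF n r x * f x) (Ioi 0) := by
  rw [gammaMeasure_natCast_succ, integrable_withDensity_iff_integrable_smul' (by fun_prop)
    (ae_of_all _ fun _ => ENNReal.ofReal_lt_top), IntegrableOn]
  refine integrable_congr ?_
  filter_upwards [ae_restrict_mem measurableSet_Ioi] with x hx
  rw [ENNReal.toReal_ofReal (erlangPDF_nonneg hr.le (le_of_lt hx)), smul_eq_mul]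

lemma ae_pos_gammaMeasure_natCast_succ (r : ℝ) :
    ∀ᵐ x ∂gammaMeasure ((n + 1 : ℕ) : ℝ) r, 0 < x := by
  rw [gammaMeasure_natCast_succ]
  exact (withDensity_absolutelyContinuous _ _).ae_le (ae_restrict_mem measurableSet_Ioi)

lemma integrable_id_gammaMeasure_natCast_succ (hr : 0 < r) :
    Integrable (fun x => x) (gammaMeasure ((n + 1 : ℕ) : ℝ) r) := by
  rw [integrable_gammaMeasure_natCast_succ_iff n hr]
  simp only [erlangPDF_mul_self n hr.ne']
  exact (integrableOn_Ioi_erlangPDF (n + 1) hr le_rfl).const_mul _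

lemma integral_id_gammaMeasure_natCast_succ (hr : 0 < r) :
    ∫ x, x ∂gammaMeasure ((n + 1 : ℕ) : ℝ) r = (n + 1) / r := by
  simp only [integral_gammaMeasure_natCast_succ n hr, erlangPDF_mul_self n hr.ne',
    integral_const_mul, integral_Ioi_erlangPDF (n + 1) hr le_rfl, mul_zero,
    erlangTail_zero_right, mul_one]

lemma integral_max_sub_const_gammaMeasure (hr : 0 < r) {b : ℝ} (hb : 0 ≤ b) :
    ∫ x, max (x - b) 0 ∂gammaMeasure ((n + 1 : ℕ) : ℝ) r = erlangStopLoss n r b := by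
  have h : ∀ x, erlangPDF n r x * max (x - b) 0 =
      (Ioi b).indicator (fun x => erlangPDF n r x * (x - b)) x := fun x => by
    rcases le_or_gt x b with hx | hx
    · rw [max_eq_right (sub_nonpos.2 hx), mul_zero, indicator_of_notMem (notMem_Ioi.2 hx)]
    · rw [max_eq_left (sub_nonneg.2 hx.le), indicator_of_mem (mem_Ioi.2 hx)]
  rw [integral_gammaMeasure_natCast_succ n hr]
  simp only [h]
  rw [setIntegral_indicator measurableSet_Ioi, Ioi_inter_Ioi, sup_of_le_right hb,
    integral_Ioi_erlangPDF_mul_sub n hr hb]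

lemma integral_max_const_sub_gammaMeasure (hr : 0 < r) {b : ℝ} (hb : 0 ≤ b) :
    ∫ x, max (b - x) 0 ∂gammaMeasure ((n + 1 : ℕ) : ℝ) r =
      b - (n + 1) / r + erlangStopLoss n r b := by
  have := isProbabilityMeasure_gammaMeasure (a := ((n + 1 : ℕ) : ℝ)) (by positivity) hr
  have hid := integrable_id_gammaMeasure_natCast_succ n hr
  have h : ∀ x : ℝ, max (b - x) 0 = (b - x) + max (x - b) 0 := fun x => by
    rcases le_total x b with hx | hx
    · rw [max_eq_left (sub_nonneg.2 hx), max_eq_right (sub_nonpos.2 hx), add_zero]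
    · rw [max_eq_right (sub_nonpos.2 hx), max_eq_left (sub_nonneg.2 hx)]
      ring
  simp only [h]
  rw [integral_add (by exact (integrable_const b).sub hid)
      (by exact (hid.sub (integrable_const b)).pos_part),
    integral_sub (integrable_const b) hid, integral_const, probReal_univ, one_smul,
    integral_id_gammaMeasure_natCast_succ n hr, integral_max_sub_const_gammaMeasure n hr hb]

lemma integral_max_const_sub_gammaMeasure_of_nonpos (r : ℝ) {b : ℝ} (hb : b ≤ 0) :
    ∫ x, max (b - x) 0 ∂gammaMeasure ((n + 1 : ℕ) : ℝ) r = 0 := by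
  refine integral_eq_zero_of_ae ?_
  filter_upwards [ae_pos_gammaMeasure_natCast_succ n r] with x hx
  exact max_eq_right (by linarith)

end GammaMeasure

lemma integral_integral_max_sub_sub_gammaMeasure (k l : ℕ) {r₁ r₂ d : ℝ} (hr₁ : 0 < r₁)
    (hr₂ : 0 < r₂) (hd : 0 ≤ d) :
    ∫ y, ∫ x, max (y - d - x) 0 ∂gammaMeasure ((k + 1 : ℕ) : ℝ) r₁
        ∂gammaMeasure ((l + 1 : ℕ) : ℝ) r₂ =
      erlangStopLoss l r₂ d - (k + 1) / r₁ * erlangTail l (r₂ * d) +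
        ∫ y in Ioi d, erlangPDF l r₂ y * erlangStopLoss k r₁ (y - d) := by
  have h : ∀ y ∈ Ioi (0 : ℝ),
      erlangPDF l r₂ y * ∫ x, max (y - d - x) 0 ∂gammaMeasure ((k + 1 : ℕ) : ℝ) r₁ =
        (Ioi d).indicator (fun y => erlangPDF l r₂ y * (y - d) -
          (k + 1) / r₁ * erlangPDF l r₂ y + erlangPDF l r₂ y * erlangStopLoss k r₁ (y - d)) y :=
    fun y _ => by
    rcases le_or_gt y d with hy | hy
    · rw [integral_max_const_sub_gammaMeasure_of_nonpos k r₁ (sub_nonpos.2 hy), mul_zero,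
        indicator_of_notMem (notMem_Ioi.2 hy)]
    · rw [integral_max_const_sub_gammaMeasure k hr₁ (sub_nonneg.2 hy.le),
        indicator_of_mem (mem_Ioi.2 hy)]
      ring
  have hsub := integrableOn_Ioi_erlangPDF_mul_sub l hr₂ hd
  have htail := (integrableOn_Ioi_erlangPDF l hr₂ hd).const_mul ((k + 1) / r₁)
  rw [integral_gammaMeasure_natCast_succ l hr₂, setIntegral_congr_fun measurableSet_Ioi h,
    setIntegral_indicator measurableSet_Ioi, Ioi_inter_Ioi, sup_of_le_right hd,
    integral_add (by exact hsub.sub htail)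
      (integrableOn_Ioi_erlangPDF_mul_erlangStopLoss_sub k l hr₁ hr₂ d),
    integral_sub hsub htail, integral_const_mul, integral_Ioi_erlangPDF_mul_sub l hr₂ hd,
    integral_Ioi_erlangPDF l hr₂ hd]

end ProbabilityTheory

theorem expected_abs_shifted_diff_gamma
    {Ω : Type*} [MeasurableSpace Ω] (μ : Measure Ω) [IsProbabilityMeasure μ]
    (lam1 lam2 : ℝ) (hlam1 : 0 < lam1) (hlam2 : 0 < lam2)
    (k l : ℕ) (hk : 1 ≤ k) (hl : 1 ≤ l)
    (Δt : ℝ) (hΔt : 0 ≤ Δt)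
    (X Y : Ω → ℝ) (hX : Measurable X) (hY : Measurable Y)
    (hindep : IndepFun X Y μ)
    (hXlaw : μ.map X = gammaMeasure k lam1)
    (hYlaw : μ.map Y = gammaMeasure l lam2) :
    (∫ ω, |X ω + Δt - Y ω| ∂μ) =
      ((k : ℝ) / lam1 - (l : ℝ) / lam2 + Δt) *
        (1 - 2 * Real.exp (-lam2 * Δt) *
          ∑ j ∈ Finset.range l, (lam2 * Δt) ^ j / (Nat.factorial j : ℝ)) +
      2 * Real.exp (-lam2 * Δt) *
        ((∑ i ∈ Finset.range k, ∑ j ∈ Finset.range l,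
            ((i + j).choose i : ℝ) *
              ((lam2 * Δt) ^ (l - 1 - j) / (Nat.factorial (l - 1 - j) : ℝ)) *
                (((k : ℝ) - (i : ℝ)) * lam1 ^ ((i : ℤ) - 1) * lam2 ^ (j + 1) /
                  (lam1 + lam2) ^ (i + j + 1))) +
          Δt * (lam2 * Δt) ^ (l - 1) / (Nat.factorial (l - 1) : ℝ)) := by
  obtain ⟨k, rfl⟩ : ∃ k', k = k' + 1 := ⟨k - 1, by omega⟩
  obtain ⟨l, rfl⟩ : ∃ l', l = l' + 1 := ⟨l - 1, by omega⟩
  have hXlaw' : HasLaw X (gammaMeasure ((k + 1 : ℕ) : ℝ) lam1) μ := ⟨hX.aemeasurable, hXlaw⟩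
  have hYlaw' : HasLaw Y (gammaMeasure ((l + 1 : ℕ) : ℝ) lam2) μ := ⟨hY.aemeasurable, hYlaw⟩
  have hXint : Integrable X μ := (hXlaw'.integrable_comp_iff aestronglyMeasurable_id).2
    (integrable_id_gammaMeasure_natCast_succ k hlam1)
  have hYint : Integrable Y μ := (hYlaw'.integrable_comp_iff aestronglyMeasurable_id).2
    (integrable_id_gammaMeasure_natCast_succ l hlam2)
  have hneg : ∫ ω, max (-(X ω + Δt - Y ω)) 0 ∂μ =
      ∫ y, ∫ x, max (y - Δt - x) 0 ∂gammaMeasure ((k + 1 : ℕ) : ℝ) lam1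
        ∂gammaMeasure ((l + 1 : ℕ) : ℝ) lam2 := by
    rw [← hindep.symm.integral_comp_eq_integral_integral hYlaw' hXlaw'
      (g := fun p => max (p.1 - Δt - p.2) 0) (by fun_prop)
      (by exact ((hYint.sub (integrable_const Δt)).sub hXint).pos_part)]
    congr 1 with ω
    ring_nf
  rw [integral_abs_eq_integral_add_two_mul_integral_max_neg
      (by exact (hXint.add (integrable_const Δt)).sub hYint), hneg,
    integral_integral_max_sub_sub_gammaMeasure k l hlam1 hlam2 hΔt,
    integral_Ioi_erlangPDF_mul_erlangStopLoss_sub k l hlam1 hlam2,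
    integral_sub (f := fun ω => X ω + Δt) (by exact hXint.add (integrable_const Δt)) hYint,
    integral_add hXint (integrable_const Δt), hXlaw'.integral_eq, hYlaw'.integral_eq,
    integral_id_gammaMeasure_natCast_succ k hlam1, integral_id_gammaMeasure_natCast_succ l hlam2,
    integral_const, probReal_univ, one_smul, erlangStopLoss_eq_tail l hlam2.ne', erlangTail]
  simp only [Nat.add_sub_cancel, neg_mul]
  push_cast
  ring
end
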